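/- arXiv:2109.14858 — 6 statements merged into one kernel-verified Lean document; each statement's English description precedes it below -/
import Mathlib

section
/- Let u be a solution of problem (P3). Then u(0) > 0. -/
open Real Filter Set MeasureTheory

noncomputable section

/-- Condition (V1): `V` is `C²` on `(0,∞)`, `r^{N-1}|V(r)|^q` is integrable near `0`
for some `q > N`, and `liminf_{r→∞} V(r)/log r > 1 - N` (possibly `+∞`). -/
def CondV1 (N : ℕ) (V : ℝ → ℝ) : Prop :=
  ContDiffOn ℝ 2 V (Set.Ioi 0) ∧
  (∃ q : ℝ, (N : ℝ) < q ∧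
    MeasureTheory.IntegrableOn (fun r : ℝ => r ^ (N - 1) * |V r| ^ q) (Set.Ioc 0 1)) ∧
  (∃ c : ℝ, 1 - (N : ℝ) < c ∧ ∀ᶠ r : ℝ in Filter.atTop, c ≤ V r / Real.log r)

/-- Condition (Vab): `a` is `C²` with compact support, `b` is `C³` with compact support,
`b ≥ 0` and `b ≡ 1` in a neighborhood of `0`. -/
def CondVab (a b : ℝ → ℝ) : Prop :=
  ContDiff ℝ 2 a ∧ HasCompactSupport a ∧
  ContDiff ℝ 3 b ∧ HasCompactSupport b ∧
  (∀ r : ℝ, 0 ≤ b r) ∧ (∀ᶠ r in nhds (0 : ℝ), b r = 1)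

/-- `θ ∈ Θ`: `θ ∈ (1-N, ∞)` and `liminf_{r→∞} (V(r) - θ log r) > -∞`. -/
def MemTheta (N : ℕ) (V : ℝ → ℝ) (θ : ℝ) : Prop :=
  1 - (N : ℝ) < θ ∧ ∃ M : ℝ, ∀ᶠ r : ℝ in Filter.atTop, M ≤ V r - θ * Real.log r

/-- A solution of problem (P3): `u ∈ C([0,∞)) ∩ C²((0,∞))`, differentiable at `0` with
`u'(0) = 0`, satisfying `u'' + ((N-1)/r)u' - V_δ u + B_δ u log u² = 0` and `u > 0` on
`(0,∞)`, and `r^{-θ/2} u(r) → 0` as `r → ∞`. -/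
def SolP3 (N : ℕ) (Vδ Bδ : ℝ → ℝ) (θ : ℝ) (u : ℝ → ℝ) : Prop :=
  ContinuousOn u (Set.Ici 0) ∧
  ContDiffOn ℝ 2 u (Set.Ioi 0) ∧
  (∀ r : ℝ, 0 < r →
    deriv (deriv u) r + ((N : ℝ) - 1) / r * deriv u r
      - Vδ r * u r + Bδ r * (u r * Real.log (u r ^ 2)) = 0) ∧
  (∀ r : ℝ, 0 < r → 0 < u r) ∧
  HasDerivWithinAt u 0 (Set.Ici 0) 0 ∧
  Filter.Tendsto (fun r : ℝ => r ^ (-(θ / 2)) * u r) Filter.atTop (nhds 0)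

/-!
Suppose `u 0 = 0`. Near `0` the equation reads `(r^{N-1} u')' = r^{N-1} f` with
`|f| ≤ g ω(u)`, where `ω(s) = s (1 - log s)` and `g = |V_δ| + 2 sup |B_δ|` is integrable at `0`
because `q > N`. The flux `r^{N-1} u'` tends to `0` at `0` since `u'(0) = 0`, so
`|u'(t)| ≤ R(t) := ∫₀ᵗ g ω(u)`, and `u ≤ R` by the mean value theorem. Thus `R > 0` satisfies
`R' ≤ g ω(R)` and `R(0+) = 0`, which Osgood's criterion forbids because `∫₀ ds / ω(s) = ∞`.
-/

open Topology

/-- Chosen so that `|s log s²| ≤ 2 ω(s)` on `[0, 1]`. -/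
def osgoodModulus (s : ℝ) : ℝ := s * (1 - log s)

lemma osgoodModulus_pos {s : ℝ} (h0 : 0 < s) (h1 : s ≤ 1) : 0 < osgoodModulus s :=
  mul_pos h0 (by linarith [log_nonpos h0.le h1])

lemma osgoodModulus_le_one {s : ℝ} (h0 : 0 ≤ s) : osgoodModulus s ≤ 1 := by
  rcases h0.eq_or_lt with rfl | hs
  · simp [osgoodModulus]
  · have hlog := mul_le_mul_of_nonneg_left (one_sub_inv_le_log_of_pos hs) hs.le
    rw [mul_sub, mul_one, mul_inv_cancel₀ hs.ne'] at hlog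
    simp only [osgoodModulus]
    linarith

lemma continuous_osgoodModulus : Continuous osgoodModulus :=
  (continuous_id.sub continuous_mul_log).congr fun s => by
    simp only [osgoodModulus, Pi.sub_apply, id]; ring

lemma hasDerivAt_osgoodModulus {s : ℝ} (hs : 0 < s) : HasDerivAt osgoodModulus (-log s) s := by
  refine ((hasDerivAt_id' s).mul ((hasDerivAt_const s 1).sub (hasDerivAt_log hs.ne'))).congr_deriv
    ?_
  simp [hs.ne']
  ring

lemma osgoodModulus_monotoneOn : MonotoneOn osgoodModulus (Icc 0 1) := by
  refine monotoneOn_of_deriv_nonneg (convex_Icc 0 1) continuous_osgoodModulus.continuousOn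
    (fun x hx => ?_) fun x hx => ?_ <;> rw [interior_Icc] at hx
  · exact (hasDerivAt_osgoodModulus hx.1).differentiableAt.differentiableWithinAt
  · rw [(hasDerivAt_osgoodModulus hx.1).deriv, neg_nonneg]
    exact log_nonpos hx.1.le hx.2.le

lemma hasDerivAt_neg_log_one_sub_log {s : ℝ} (h0 : 0 < s) (h1 : s ≤ 1) :
    HasDerivAt (fun s => -log (1 - log s)) (osgoodModulus s)⁻¹ s := by
  have hpos : 0 < 1 - log s := by linarith [log_nonpos h0.le h1]
  refine (((hasDerivAt_log h0.ne').const_sub 1).log hpos.ne').neg.congr_deriv ?_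
  simp only [osgoodModulus]
  field_simp

lemma tendsto_neg_log_one_sub_log :
    Tendsto (fun s => -log (1 - log s)) (𝓝[>] 0) atBot := by
  have h : Tendsto (fun s => 1 - log s) (𝓝[>] 0) atTop := by
    simpa only [sub_eq_add_neg, Function.comp_def] using
      tendsto_atTop_add_const_left _ 1 (tendsto_neg_atBot_atTop.comp tendsto_log_nhdsGT_zero)
  exact tendsto_neg_atTop_atBot.comp (tendsto_log_atTop.comp h)

/-- Osgood's criterion: `-log (1 - log R) - G` is antitone, yet it tends to `-∞` at `0`. -/
theorem not_tendsto_zero_of_deriv_le_mul_osgoodModulus {R R' G g : ℝ → ℝ} {ρ : ℝ} (hρ : 0 < ρ)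
    (hR : ∀ x ∈ Ioo 0 ρ, HasDerivAt R (R' x) x) (hG : ∀ x ∈ Ioo 0 ρ, HasDerivAt G (g x) x)
    (hR' : ∀ x ∈ Ioo 0 ρ, R' x ≤ g x * osgoodModulus (R x))
    (hRpos : ∀ x ∈ Ioo 0 ρ, 0 < R x) (hR1 : ∀ x ∈ Ioo 0 ρ, R x ≤ 1)
    (hGbdd : BddBelow (G '' Ioo 0 ρ)) : ¬ Tendsto R (𝓝[>] 0) (𝓝 0) := by
  intro hR0
  set D : ℝ → ℝ := fun x => -log (1 - log (R x)) - G x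
  have hD : ∀ x ∈ Ioo 0 ρ, HasDerivAt D ((osgoodModulus (R x))⁻¹ * R' x - g x) x := fun x hx =>
    ((hasDerivAt_neg_log_one_sub_log (hRpos x hx) (hR1 x hx)).comp x (hR x hx)).sub (hG x hx)
  have hD_anti : AntitoneOn D (Ioo 0 ρ) := by
    refine antitoneOn_of_deriv_nonpos (convex_Ioo 0 ρ)
      (fun x hx => (hD x hx).continuousAt.continuousWithinAt) (fun x hx => ?_) fun x hx => ?_ <;>
      rw [interior_Ioo] at hx
    · exact (hD x hx).differentiableAt.differentiableWithinAt
    · rw [(hD x hx).deriv, sub_nonpos, inv_mul_le_iff₀ (osgoodModulus_pos (hRpos x hx) (hR1 x hx)),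
        mul_comm]
      exact hR' x hx
  obtain ⟨m, hm⟩ := hGbdd
  have hΦR : Tendsto (fun x => -log (1 - log (R x))) (𝓝[>] 0) atBot :=
    tendsto_neg_log_one_sub_log.comp (tendsto_nhdsWithin_iff.2
      ⟨hR0, by filter_upwards [Ioo_mem_nhdsGT hρ] using hRpos⟩)
  obtain ⟨x, hΦx, hx⟩ := ((hΦR.eventually_lt_atBot (D (ρ / 2) + m)).and
    (Ioo_mem_nhdsGT (half_pos hρ))).exists
  have hmid : ρ / 2 ∈ Ioo 0 ρ := ⟨half_pos hρ, half_lt_self hρ⟩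
  have hxρ : x ∈ Ioo 0 ρ := ⟨hx.1, hx.2.trans hmid.2⟩
  have hDx := hD_anti hxρ hmid hx.2.le
  have hGx := hm ⟨x, hxρ, rfl⟩
  simp only [D] at hDx
  linarith

lemma intervalIntegrable_of_integrableOn_Ioc {f : ℝ → ℝ} {ρ s t : ℝ}
    (hf : IntegrableOn f (Ioc 0 ρ)) (hs : 0 ≤ s) (hst : s ≤ t) (ht : t ≤ ρ) :
    IntervalIntegrable f volume s t :=
  (intervalIntegrable_iff_integrableOn_Ioc_of_le hst).2 (hf.mono_set (Ioc_subset_Ioc hs ht))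

lemma tendsto_integral_nhdsGT_zero {f : ℝ → ℝ} {ρ : ℝ} (hρ : 0 < ρ)
    (hf : IntegrableOn f (Ioc 0 ρ)) : Tendsto (fun t => ∫ x in 0..t, f x) (𝓝[>] 0) (𝓝 0) := by
  have h := intervalIntegral.continuousWithinAt_primitive (a := 0) (b₀ := 0) (b₁ := 0) (b₂ := ρ)
    (f := f) Real.volume_singleton (by simpa [hρ.le] using
      intervalIntegrable_of_integrableOn_Ioc hf le_rfl hρ.le le_rfl)
  simpa [ContinuousWithinAt, nhdsWithin_Ioc_eq_nhdsGT hρ] using h.mono Ioc_subset_Icc_self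

lemma hasDerivAt_integral_of_continuousOn_Ioi {f : ℝ → ℝ} {ρ x : ℝ}
    (hf : IntegrableOn f (Ioc 0 ρ)) (hc : ContinuousOn f (Ioi 0)) (hx : x ∈ Ioo 0 ρ) :
    HasDerivAt (fun t => ∫ y in 0..t, f y) (f x) x :=
  intervalIntegral.integral_hasDerivAt_right
    (intervalIntegrable_of_integrableOn_Ioc hf le_rfl hx.1.le hx.2.le)
    (hc.stronglyMeasurableAtFilter isOpen_Ioi x hx.1) (hc.continuousAt (Ioi_mem_nhds hx.1))

lemma abs_mul_sub_mul_mul_log_sq_le {v B β s : ℝ} (hB : |B| ≤ β) (hs0 : 0 ≤ s) (hs1 : s ≤ 1) :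
    |v * s - B * (s * log (s ^ 2))| ≤ (|v| + 2 * β) * osgoodModulus s := by
  have hlog : log s ≤ 0 := log_nonpos hs0 hs1
  have hterm : |B * (s * log (s ^ 2))| = |B| * (2 * (s * -log s)) := by
    have h : s * log (s ^ 2) = -(2 * (s * -log s)) := by rw [log_pow]; push_cast; ring
    rw [h, abs_mul, abs_neg,
      abs_of_nonneg (mul_nonneg zero_le_two (mul_nonneg hs0 (neg_nonneg.2 hlog)))]
  calc |v * s - B * (s * log (s ^ 2))| ≤ |v| * s + |B| * (2 * (s * -log s)) := by
        rw [← hterm, ← abs_of_nonneg hs0, ← abs_mul, abs_of_nonneg hs0]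
        exact abs_sub _ _
  _ ≤ (|v| + 2 * β) * osgoodModulus s := by
        simp only [osgoodModulus]
        nlinarith [mul_nonneg (abs_nonneg v) (mul_nonneg hs0 (neg_nonneg.2 hlog)),
          mul_le_mul_of_nonneg_right hB (mul_nonneg hs0 (neg_nonneg.2 hlog)),
          mul_nonneg ((abs_nonneg B).trans hB) hs0]

lemma abs_le_pow_mul_rpow_add_rpow {k : ℕ} {q x v : ℝ} (hq : 1 < q) (hx : 0 < x) :
    |v| ≤ x ^ k * |v| ^ q + x ^ (-(k / (q - 1))) := by
  rcases le_or_gt |v| (x ^ (-(k / (q - 1)))) with h | h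
  · linarith [mul_nonneg (pow_nonneg hx.le k) (rpow_nonneg (abs_nonneg v) q)]
  have hv : 0 < |v| := (rpow_pos_of_pos hx _).trans h
  have hpow : x ^ (-(k : ℝ)) ≤ |v| ^ (q - 1) := calc
    x ^ (-(k : ℝ)) = (x ^ (-(k / (q - 1)))) ^ (q - 1) := by
      rw [← rpow_mul hx.le]; field_simp [(by linarith : q - 1 ≠ 0)]
    _ ≤ |v| ^ (q - 1) := rpow_le_rpow (rpow_nonneg hx.le _) h.le (by linarith)
  have hone : 1 ≤ x ^ k * |v| ^ (q - 1) := calc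
    (1 : ℝ) = x ^ k * x ^ (-(k : ℝ)) := by
      rw [rpow_neg hx.le, rpow_natCast, mul_inv_cancel₀ (pow_ne_zero _ hx.ne')]
    _ ≤ x ^ k * |v| ^ (q - 1) := mul_le_mul_of_nonneg_left hpow (pow_nonneg hx.le k)
  calc |v| ≤ x ^ k * |v| ^ (q - 1) * |v| := le_mul_of_one_le_left hv.le hone
  _ = x ^ k * |v| ^ q := by rw [mul_assoc, ← rpow_add_one hv.ne', sub_add_cancel]
  _ ≤ x ^ k * |v| ^ q + x ^ (-(k / (q - 1))) := le_add_of_nonneg_right (rpow_nonneg hx.le _)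

theorem integrableOn_of_integrableOn_pow_mul_rpow {k : ℕ} {q : ℝ} {V : ℝ → ℝ} (hq : k + 1 < q)
    (hV : AEStronglyMeasurable V (volume.restrict (Ioc 0 1)))
    (h : IntegrableOn (fun r => r ^ k * |V r| ^ q) (Ioc 0 1)) : IntegrableOn V (Ioc 0 1) := by
  have hα : -1 < -(k / (q - 1)) := by
    rw [neg_lt_neg_iff, div_lt_one (by linarith)]; linarith
  refine (h.add ((intervalIntegrable_iff_integrableOn_Ioc_of_le zero_le_one).1
    (intervalIntegral.intervalIntegrable_rpow' hα))).mono' hV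
    ((ae_restrict_iff' measurableSet_Ioc).2 (Eventually.of_forall fun x hx =>
      abs_le_pow_mul_rpow_add_rpow (by linarith [(Nat.cast_nonneg k : (0:ℝ) ≤ k)]) hx.1))

lemma hasDerivAt_pow_mul {f : ℝ → ℝ} {f' x : ℝ} (k : ℕ) (hx : x ≠ 0) (hf : HasDerivAt f f' x) :
    HasDerivAt (fun y => y ^ k * f y) (x ^ k * (f' + k / x * f x)) x := by
  refine ((hasDerivAt_pow k x).mul hf).congr_deriv ?_
  rcases k with _ | k
  · simp
  · rw [Nat.add_sub_cancel, pow_succ]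
    field_simp
    ring

lemma exists_hasDerivAt_eq_div_of_continuousWithinAt {u u' : ℝ → ℝ}
    (hu0 : ContinuousWithinAt u (Ici 0) 0) (hu : ∀ x ∈ Ioi 0, HasDerivAt u (u' x) x) {t : ℝ}
    (ht : 0 < t) : ∃ c ∈ Ioo 0 t, u' c = (u t - u 0) / t := by
  have hcont : ContinuousOn u (Icc 0 t) := fun x hx => by
    rcases hx.1.eq_or_lt with rfl | hx0
    · exact hu0.mono Icc_subset_Ici_self
    · exact (hu x hx0).continuousAt.continuousWithinAt
  simpa using exists_hasDerivAt_eq_slope u u' ht hcont fun x hx => hu x hx.1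

lemma frequently_abs_deriv_lt {u u' : ℝ → ℝ} (hu0 : HasDerivWithinAt u 0 (Ici 0) 0)
    (hu : ∀ x ∈ Ioi 0, HasDerivAt u (u' x) x) {ε : ℝ} (hε : 0 < ε) :
    ∃ᶠ x in 𝓝[>] 0, |u' x| < ε := by
  intro hlarge
  simp only [not_lt] at hlarge
  obtain ⟨t, ht, hlarge⟩ := mem_nhdsGT_iff_exists_Ioc_subset.1 hlarge
  have hslope : Tendsto (slope u 0) (𝓝[>] 0) (𝓝 0) :=
    (hasDerivWithinAt_iff_tendsto_slope' (lt_irrefl 0)).1 hu0.Ioi_of_Ici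
  obtain ⟨r, hr, hrt⟩ := ((hslope.abs.eventually_lt_const (by simpa using hε)).and
    (Ioc_mem_nhdsGT ht)).exists
  obtain ⟨c, hc, hcslope⟩ :=
    exists_hasDerivAt_eq_div_of_continuousWithinAt hu0.continuousWithinAt hu hrt.1
  have hc_large := hlarge ⟨hc.1, hc.2.le.trans hrt.2⟩
  rw [slope_def_field, sub_zero] at hr
  simp only [mem_ofPred_eq, hcslope] at hc_large
  linarith

theorem pow_mul_eq_integral_of_hasDerivWithinAt_zero {k : ℕ} {u u' φ : ℝ → ℝ} {t : ℝ} (ht : 0 < t)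
    (hu0 : HasDerivWithinAt u 0 (Ici 0) 0) (hu : ∀ x ∈ Ioi 0, HasDerivAt u (u' x) x)
    (hw : ∀ x ∈ Ioi 0, HasDerivAt (fun y => y ^ k * u' y) (φ x) x)
    (hφ : IntegrableOn φ (Ioc 0 t)) :
    t ^ k * u' t = ∫ x in 0..t, φ x := by
  set W : ℝ → ℝ := fun s => ∫ x in 0..s, φ x
  have hconst : ∀ s ∈ Ioc 0 t, s ^ k * u' s - W s = t ^ k * u' t - W t := fun s hs => by
    have hflux := intervalIntegral.integral_eq_sub_of_hasDerivAt
      (fun x hx => hw x (hs.1.trans_le (uIcc_of_le hs.2 ▸ hx).1))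
      (intervalIntegrable_of_integrableOn_Ioc hφ hs.1.le hs.2 le_rfl)
    have hsplit := intervalIntegral.integral_interval_sub_left
      (intervalIntegrable_of_integrableOn_Ioc hφ le_rfl ht.le le_rfl)
      (intervalIntegrable_of_integrableOn_Ioc hφ le_rfl hs.1.le hs.2)
    linarith
  -- the constant is the limit of the flux at `0`, which vanishes because `u'(0) = 0`
  rw [← sub_eq_zero, ← abs_nonpos_iff]
  refine le_of_forall_pos_lt_add fun ε hε => ?_
  have hW : ∀ᶠ s in 𝓝[>] 0, |W s| < ε / 2 :=
    (tendsto_integral_nhdsGT_zero ht hφ).abs.eventually_lt_const (by simpa using half_pos hε)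
  obtain ⟨s, ⟨hu's, hWs⟩, hs⟩ := (((frequently_abs_deriv_lt hu0 hu (half_pos hε)).and_eventually
    hW).and_eventually (Ioc_mem_nhdsGT (lt_min ht one_pos))).exists
  have hsk : s ^ k ≤ 1 := pow_le_one₀ hs.1.le (hs.2.trans (min_le_right _ _))
  rw [← hconst s ⟨hs.1, hs.2.trans (min_le_left _ _)⟩]
  calc |s ^ k * u' s - W s| ≤ s ^ k * |u' s| + |W s| := by
        simpa [abs_mul, abs_of_nonneg (pow_nonneg hs.1.le k)] using abs_sub (s ^ k * u' s) (W s)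
  _ < 0 + ε := by nlinarith [abs_nonneg (u' s)]

theorem abs_deriv_le_integral {k : ℕ} {u u' u'' h : ℝ → ℝ} {t : ℝ} (ht : 0 < t)
    (hu0 : HasDerivWithinAt u 0 (Ici 0) 0) (hu : ∀ x ∈ Ioi 0, HasDerivAt u (u' x) x)
    (hu' : ∀ x ∈ Ioi 0, HasDerivAt u' (u'' x) x) (hu''c : ContinuousOn u'' (Ioi 0))
    (hh : IntegrableOn h (Ioc 0 t)) (hle : ∀ x ∈ Ioc 0 t, |u'' x + k / x * u' x| ≤ h x) :
    |u' t| ≤ ∫ x in 0..t, h x := by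
  set φ : ℝ → ℝ := fun x => x ^ k * (u'' x + k / x * u' x)
  have hφc : ContinuousOn φ (Ioi 0) := by
    have hu'c : ContinuousOn u' (Ioi 0) := fun x hx => (hu' x hx).continuousAt.continuousWithinAt
    exact (continuousOn_pow k).mul (hu''c.add ((continuousOn_const.div continuousOn_id
      fun x hx => ne_of_gt hx).mul hu'c))
  have hφle : ∀ x ∈ Ioc 0 t, |φ x| ≤ t ^ k * h x := fun x hx => by
    rw [abs_mul, abs_of_nonneg (pow_nonneg hx.1.le k)]
    exact mul_le_mul (pow_le_pow_left₀ hx.1.le hx.2 k) (hle x hx) (abs_nonneg _)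
      (pow_nonneg ht.le k)
  have hφint : IntegrableOn φ (Ioc 0 t) :=
    (hh.const_mul (t ^ k)).mono'
      ((hφc.mono fun x hx => hx.1).aestronglyMeasurable measurableSet_Ioc)
      ((ae_restrict_iff' measurableSet_Ioc).2 (Eventually.of_forall hφle))
  have hflux := pow_mul_eq_integral_of_hasDerivWithinAt_zero ht hu0 hu
    (fun x hx => hasDerivAt_pow_mul k (ne_of_gt hx) (hu' x hx)) hφint
  have htk : 0 < t ^ k := pow_pos ht k
  refine le_of_mul_le_mul_left ?_ htk
  calc t ^ k * |u' t| = |∫ x in 0..t, φ x| := by rw [← hflux, abs_mul, abs_of_pos htk]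
  _ ≤ ∫ x in 0..t, |φ x| := intervalIntegral.abs_integral_le_integral_abs ht.le
  _ ≤ ∫ x in 0..t, t ^ k * h x :=
      intervalIntegral.integral_mono_on_of_le_Ioo ht.le
        (intervalIntegrable_of_integrableOn_Ioc hφint le_rfl ht.le le_rfl).abs
        ((intervalIntegrable_of_integrableOn_Ioc hh le_rfl ht.le le_rfl).const_mul _)
        fun x hx => hφle x (Ioo_subset_Ioc_self hx)
  _ = t ^ k * ∫ x in 0..t, h x := intervalIntegral.integral_const_mul _ _

theorem le_integral_of_abs_le {k : ℕ} {u h : ℝ → ℝ} {t : ℝ} (ht : 0 < t) (ht1 : t ≤ 1)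
    (hu : ContDiffOn ℝ 2 u (Ioi 0)) (hu0 : HasDerivWithinAt u 0 (Ici 0) 0) (hu00 : u 0 = 0)
    (hh : IntegrableOn h (Ioc 0 t))
    (hle : ∀ x ∈ Ioc 0 t, |deriv (deriv u) x + k / x * deriv u x| ≤ h x) :
    u t ≤ ∫ x in 0..t, h x := by
  have hu' : ContDiffOn ℝ 1 (deriv u) (Ioi 0) := hu.deriv_of_isOpen isOpen_Ioi (by norm_num)
  have hd : ∀ x ∈ Ioi 0, HasDerivAt u (deriv u x) x := fun x hx =>
    (hu.differentiableOn two_ne_zero).hasDerivAt (Ioi_mem_nhds hx)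
  obtain ⟨c, hc, hslope⟩ :=
    exists_hasDerivAt_eq_div_of_continuousWithinAt hu0.continuousWithinAt hd ht
  have hc_le : |deriv u c| ≤ ∫ x in 0..c, h x :=
    abs_deriv_le_integral hc.1 hu0 hd
      (fun x hx => (hu'.differentiableOn one_ne_zero).hasDerivAt (Ioi_mem_nhds hx))
      (hu'.continuousOn_deriv_of_isOpen isOpen_Ioi le_rfl)
      (hh.mono_set (Ioc_subset_Ioc le_rfl hc.2.le)) fun x hx => hle x ⟨hx.1, hx.2.trans hc.2.le⟩
  have hct : ∫ x in 0..c, h x ≤ ∫ x in 0..t, h x :=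
    intervalIntegral.integral_mono_interval le_rfl hc.1.le hc.2.le
      ((ae_restrict_iff' measurableSet_Ioc).2 (Eventually.of_forall fun x hx =>
        (abs_nonneg _).trans (hle x hx)))
      (intervalIntegrable_of_integrableOn_Ioc hh le_rfl ht.le le_rfl)
  have hnonneg : 0 ≤ ∫ x in 0..t, h x := (abs_nonneg _).trans (hc_le.trans hct)
  rw [hu00, sub_zero, eq_div_iff ht.ne'] at hslope
  nlinarith [mul_le_mul_of_nonneg_right (le_abs_self (deriv u c)) ht.le,
    mul_le_mul_of_nonneg_right (hc_le.trans hct) ht.le, mul_le_mul_of_nonneg_left ht1 hnonneg]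

theorem exists_nonpos_of_abs_le_mul_osgoodModulus {k : ℕ} {u g : ℝ → ℝ} {ρ : ℝ}
    (hρ : 0 < ρ) (hρ1 : ρ ≤ 1)
    (hu : ContDiffOn ℝ 2 u (Ioi 0)) (hu0 : HasDerivWithinAt u 0 (Ici 0) 0) (hu00 : u 0 = 0)
    (hg : IntegrableOn g (Ioc 0 ρ)) (hgc : ContinuousOn g (Ioi 0)) (hg0 : ∀ x, 0 ≤ g x)
    (hgρ : ∫ x in 0..ρ, g x ≤ 1)
    (hode : ∀ x ∈ Ioc 0 ρ,
      |deriv (deriv u) x + k / x * deriv u x| ≤ g x * osgoodModulus (u x)) :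
    ∃ x ∈ Ioc 0 ρ, u x ≤ 0 := by
  by_contra! hpos
  set h : ℝ → ℝ := fun x => g x * osgoodModulus (u x)
  have hhc : ContinuousOn h (Ioi 0) :=
    hgc.mul (continuous_osgoodModulus.comp_continuousOn hu.continuousOn)
  have hhg : ∀ x ∈ Ioc 0 ρ, h x ≤ g x := fun x hx =>
    mul_le_of_le_one_right (hg0 x) (osgoodModulus_le_one (hpos x hx).le)
  have hhint : IntegrableOn h (Ioc 0 ρ) :=
    hg.mono' ((hhc.mono fun x hx => hx.1).aestronglyMeasurable measurableSet_Ioc)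
      ((ae_restrict_iff' measurableSet_Ioc).2 (Eventually.of_forall fun x hx => by
        rw [Real.norm_eq_abs, abs_of_nonneg ((abs_nonneg _).trans (hode x hx))]
        exact hhg x hx))
  set R : ℝ → ℝ := fun t => ∫ x in 0..t, h x
  have hu_le_R : ∀ x ∈ Ioo 0 ρ, u x ≤ R x := fun x hx =>
    le_integral_of_abs_le hx.1 (hx.2.le.trans hρ1) hu hu0 hu00
      (hhint.mono_set (Ioc_subset_Ioc le_rfl hx.2.le)) fun y hy => hode y ⟨hy.1, hy.2.trans hx.2.le⟩
  have hR_le_one : ∀ x ∈ Ioo 0 ρ, R x ≤ 1 := fun x hx => calc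
    R x ≤ ∫ y in 0..x, g y := intervalIntegral.integral_mono_on_of_le_Ioo hx.1.le
        (intervalIntegrable_of_integrableOn_Ioc hhint le_rfl hx.1.le hx.2.le)
        (intervalIntegrable_of_integrableOn_Ioc hg le_rfl hx.1.le hx.2.le) fun y hy =>
          hhg y ⟨hy.1, hy.2.le.trans hx.2.le⟩
    _ ≤ ∫ y in 0..ρ, g y := intervalIntegral.integral_mono_interval le_rfl hx.1.le hx.2.le
        (Eventually.of_forall hg0) (intervalIntegrable_of_integrableOn_Ioc hg le_rfl hρ.le le_rfl)
    _ ≤ 1 := hgρ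
  have hu_pos : ∀ x ∈ Ioo 0 ρ, 0 < u x := fun x hx => hpos x (Ioo_subset_Ioc_self hx)
  refine not_tendsto_zero_of_deriv_le_mul_osgoodModulus hρ
    (fun x hx => hasDerivAt_integral_of_continuousOn_Ioi hhint hhc hx)
    (fun x hx => hasDerivAt_integral_of_continuousOn_Ioi hg hgc hx)
    (fun x hx => mul_le_mul_of_nonneg_left (osgoodModulus_monotoneOn
      ⟨(hu_pos x hx).le, (hu_le_R x hx).trans (hR_le_one x hx)⟩
      ⟨(hu_pos x hx).le.trans (hu_le_R x hx), hR_le_one x hx⟩ (hu_le_R x hx)) (hg0 x))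
    (fun x hx => (hu_pos x hx).trans_le (hu_le_R x hx)) hR_le_one
    ⟨0, ?_⟩ (tendsto_integral_nhdsGT_zero hρ hhint)
  rintro _ ⟨x, hx, rfl⟩
  exact intervalIntegral.integral_nonneg hx.1.le fun y _ => hg0 y

theorem frequently_nonpos_of_abs_le_mul_osgoodModulus {k : ℕ} {u g : ℝ → ℝ}
    (hu : ContDiffOn ℝ 2 u (Ioi 0)) (hu0 : HasDerivWithinAt u 0 (Ici 0) 0) (hu00 : u 0 = 0)
    (hg : IntegrableOn g (Ioc 0 1)) (hgc : ContinuousOn g (Ioi 0)) (hg0 : ∀ x, 0 ≤ g x)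
    (hode : ∀ᶠ x in 𝓝[>] 0,
      |deriv (deriv u) x + k / x * deriv u x| ≤ g x * osgoodModulus (u x)) :
    ∃ᶠ x in 𝓝[>] 0, u x ≤ 0 := by
  refine frequently_iff.2 fun {U} hU => ?_
  obtain ⟨ρ₁, hρ₁, hsub⟩ := mem_nhdsGT_iff_exists_Ioc_subset.1 (hode.and hU)
  obtain ⟨ρ, hGρ, hρ⟩ := (((tendsto_integral_nhdsGT_zero one_pos hg).eventually_le_const
    one_pos).and (Ioc_mem_nhdsGT (lt_min hρ₁ one_pos))).exists
  have hIoc : Ioc 0 ρ ⊆ Ioc 0 ρ₁ := Ioc_subset_Ioc le_rfl (hρ.2.trans (min_le_left _ _))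
  obtain ⟨x, hx, hux⟩ := exists_nonpos_of_abs_le_mul_osgoodModulus hρ.1
    (hρ.2.trans (min_le_right _ _)) hu hu0 hu00
    (hg.mono_set (Ioc_subset_Ioc le_rfl (hρ.2.trans (min_le_right _ _)))) hgc hg0 hGρ
    fun x hx => (hsub (hIoc hx)).1
  exact ⟨x, (hsub (hIoc hx)).2, hux⟩

lemma CondV1.integrableOn_Ioc {N : ℕ} {V : ℝ → ℝ} (hN : 1 ≤ N) (hV : CondV1 N V) :
    IntegrableOn V (Ioc 0 1) := by
  obtain ⟨hVreg, ⟨q, hqN, hVq⟩, -⟩ := hV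
  refine integrableOn_of_integrableOn_pow_mul_rpow (by rw [Nat.cast_sub hN, Nat.cast_one]; linarith)
    ((hVreg.continuousOn.mono Ioc_subset_Ioi_self).aestronglyMeasurable measurableSet_Ioc) hVq

lemma exists_abs_one_add_mul_le {b : ℝ → ℝ} (hb : Continuous b) (hbC : HasCompactSupport b)
    (δ : ℝ) : ∃ β, ∀ r, |1 + δ * b r| ≤ β := by
  obtain ⟨C, hC⟩ := hbC.exists_bound_of_continuous hb
  refine ⟨1 + |δ| * C, fun r => ?_⟩
  calc |1 + δ * b r| ≤ 1 + |δ| * |b r| := by simpa [abs_mul] using abs_add_le 1 (δ * b r)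
  _ ≤ 1 + |δ| * C := by gcongr; exact hC r

theorem sol_P3_positive_at_zero_general (N : ℕ) (hN : 2 ≤ N) (V a b : ℝ → ℝ) (δ θ : ℝ)
    (hV1 : CondV1 N V) (hVab : CondVab a b)
    (u : ℝ → ℝ)
    (hu : SolP3 N (fun r => V r + δ * a r) (fun r => 1 + δ * b r) θ u) :
    0 < u 0 := by
  obtain ⟨ha, -, hb, hbC, -, -⟩ := hVab
  obtain ⟨hucont, huC2, hode, hupos, hu0, -⟩ := hu
  have hlim : Tendsto u (𝓝[>] 0) (𝓝 (u 0)) :=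
    (hucont 0 self_mem_Ici).mono_left (nhdsWithin_mono _ Ioi_subset_Ici_self)
  refine (ge_of_tendsto hlim (eventually_nhdsWithin_of_forall fun x hx =>
    (hupos x hx).le)).lt_of_ne' fun hu00 => ?_
  obtain ⟨β, hβ⟩ := exists_abs_one_add_mul_le hb.continuous hbC δ
  set g : ℝ → ℝ := fun x => |V x + δ * a x| + 2 * β
  have hg : IntegrableOn g (Ioc 0 1) :=
    ((hV1.integrableOn_Ioc (by omega)).add (ha.continuous.integrableOn_Ioc.const_mul δ)).abs.add
      (integrableOn_const measure_Ioc_lt_top.ne)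
  have hgc : ContinuousOn g (Ioi 0) :=
    ((hV1.1.continuousOn.add (continuous_const.mul ha.continuous).continuousOn).abs).add
      continuousOn_const
  have hbound : ∀ᶠ x in 𝓝[>] 0, |deriv (deriv u) x + ((N - 1 : ℕ) : ℝ) / x * deriv u x| ≤
      g x * osgoodModulus (u x) := by
    filter_upwards [self_mem_nhdsWithin, hlim.eventually_lt_const (hu00 ▸ one_pos)] with x hx hx1
    have hode_x := hode x hx
    rw [Nat.cast_sub (by omega), Nat.cast_one, show deriv (deriv u) x + ((N : ℝ) - 1) / x *
      deriv u x = (V x + δ * a x) * u x - (1 + δ * b x) * (u x * log (u x ^ 2)) by linarith]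
    exact abs_mul_sub_mul_mul_log_sq_le (hβ x) (hupos x hx).le hx1.le
  obtain ⟨x, hx, hx0⟩ := ((frequently_nonpos_of_abs_le_mul_osgoodModulus huC2 hu0 hu00 hg hgc
    (fun x => add_nonneg (abs_nonneg _) (mul_nonneg zero_le_two ((abs_nonneg _).trans (hβ 0))))
    hbound).and_eventually self_mem_nhdsWithin).exists
  exact (hupos x hx0).not_ge hx

/-- Let `u` be a solution of problem (P3). Then `u(0) > 0`. -/
theorem sol_P3_positive_at_zero (N : ℕ) (hN : 2 ≤ N) (V a b : ℝ → ℝ) (δ θ : ℝ)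
    (hV1 : CondV1 N V) (hVab : CondVab a b) (hδ : 0 ≤ δ) (hθ : MemTheta N V θ)
    (u : ℝ → ℝ)
    (hu : SolP3 N (fun r => V r + δ * a r) (fun r => 1 + δ * b r) θ u) :
    0 < u 0 :=
  sol_P3_positive_at_zero_general N hN V a b δ θ hV1 hVab u hu
end
end

section
/- Let u be a solution of problem (P3). Then for every τ ∈ (0, 1/2), u(r)·e^{τ r²} → 0 as r → ∞. -/
open Real Filter Set MeasureTheory

noncomputable section

open Topology

/-! Far out, `a` and `b` vanish and `u'' + (N - 1)/r u' = (V - log u²) u`. Since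
`u = o(r^{θ/2})` and `V ≥ θ log r + M`, the coefficient `V - log u²` eventually exceeds any
constant. Hence `u` cannot stay bounded below: integrating `(r^{N-1} u')' ≥ r^{N-1} u` twice, over
and over, would make it outgrow every power of `r`. This is what a maximum principle needs to put
`u` below the Gaussian `w = u(R) e^{-τ (r - R)²}` for `τ < 1/2` and `R` large: where `u > w` and
`u' = w'`, the monotonicity of `s ↦ (V - log s²) s` and `2τ - 4τ² > 0` force `w'' < u''`, which is
impossible at a positive maximum of `u - w`. -/

theorem IsLocalMax.deriv_deriv_nonpos {f : ℝ → ℝ} {x₀ : ℝ} (h : IsLocalMax f x₀)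
    (hc : ContinuousAt f x₀) : deriv (deriv f) x₀ ≤ 0 := by
  by_contra! hpos
  have hconst : f =ᶠ[𝓝 x₀] fun _ => f x₀ := by
    filter_upwards [h, isLocalMin_of_deriv_deriv_pos hpos h.deriv_eq_zero hc] with x hmax hmin
    exact le_antisymm hmax hmin
  have hderiv : deriv f =ᶠ[𝓝 x₀] fun _ => 0 := by
    simpa using hconst.deriv
  simp [hderiv.deriv_eq] at hpos

theorem HasCompactSupport.eventually_eq_zero_atTop {f : ℝ → ℝ} (hf : HasCompactSupport f) :
    ∀ᶠ r in atTop, f r = 0 :=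
  Eventually.mono (atTop_le_cocompact hf.isCompact.compl_mem_cocompact)
    fun _ hr => image_eq_zero_of_notMem_tsupport hr

theorem ContDiffOn.differentiableAt_deriv {f : ℝ → ℝ} {s : Set ℝ} {x : ℝ}
    (hf : ContDiffOn ℝ 2 f s) (hs : IsOpen s) (hx : x ∈ s) : DifferentiableAt ℝ (deriv f) x :=
  ((hf.deriv_of_isOpen hs (by norm_num)).differentiableOn one_ne_zero).differentiableAt
    (hs.mem_nhds hx)

theorem le_of_deriv_deriv_lt {u w : ℝ → ℝ} {R : ℝ}
    (hu : ContinuousOn u (Ici R)) (hu2 : ContDiffOn ℝ 2 u (Ioi R)) (hw : ContDiff ℝ 2 w)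
    (hR : u R ≤ w R) (hsmall : ∀ d > 0, ∃ᶠ r in atTop, u r - w r < d)
    (htouch : ∀ r > R, w r < u r → deriv u r = deriv w r →
      deriv (deriv w) r < deriv (deriv u) r) :
    ∀ r ≥ R, u r ≤ w r := by
  by_contra! ⟨r₁, hr₁R, hr₁⟩
  set g := fun r => u r - w r with hg
  obtain ⟨T, hTg, hr₁T⟩ := ((hsmall _ (sub_pos.2 hr₁)).and_eventually
    (eventually_gt_atTop r₁)).exists
  obtain ⟨rs, hrs, hmax⟩ := isCompact_Icc.exists_isMaxOn
    ⟨R, left_mem_Icc.2 (hr₁R.trans hr₁T.le)⟩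
    ((hu.mono Icc_subset_Ici_self).sub hw.continuous.continuousOn)
  have hgrs : g r₁ ≤ g rs := hmax ⟨hr₁R, hr₁T.le⟩
  have hRrs : R < rs := hrs.1.lt_of_ne fun h => by
    subst h; simp only [hg] at hgrs; linarith
  have hrsT : rs < T := hrs.2.lt_of_ne fun h => by
    subst h; simp only [hg] at hgrs hTg; linarith
  have hloc : IsLocalMax g rs := hmax.isLocalMax (Icc_mem_nhds hRrs hrsT)
  have hderiv : deriv g =ᶠ[𝓝 rs] fun r => deriv u r - deriv w r := by
    filter_upwards [Ioi_mem_nhds hRrs] with r hr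
    exact deriv_sub ((hu2.differentiableOn two_ne_zero).differentiableAt (Ioi_mem_nhds hr))
      (hw.differentiable two_ne_zero).differentiableAt
  have hfirst : deriv u rs = deriv w rs := by
    have := hloc.deriv_eq_zero
    rw [hderiv.eq_of_nhds] at this
    linarith
  have hsecond := hloc.deriv_deriv_nonpos
    ((hu.continuousAt (Ici_mem_nhds hRrs)).sub hw.continuous.continuousAt)
  rw [hderiv.deriv_eq, deriv_fun_sub (hu2.differentiableAt_deriv isOpen_Ioi hRrs)
    ((hw.contDiffOn (s := Ioi R)).differentiableAt_deriv isOpen_Ioi hRrs)] at hsecond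
  have := htouch rs hRrs (by simp only [hg] at hgrs; linarith) hfirst
  linarith

theorem exists_pos_mul_pow_succ_le_of_hasDerivAt {f f' : ℝ → ℝ} {C : ℝ} (m : ℕ) (hC : 0 < C)
    (hf : ∀ᶠ r in atTop, HasDerivAt f (f' r) r) (hf' : ∀ᶠ r in atTop, C * r ^ m ≤ f' r) :
    ∃ C' > 0, ∀ᶠ r in atTop, C' * r ^ (m + 1) ≤ f r := by
  obtain ⟨A, hA⟩ := eventually_atTop.1 (hf.and hf')
  set c := C / (m + 1)
  have hc : 0 < c := by positivity
  have hpow (r : ℝ) : HasDerivAt (fun x => c * x ^ (m + 1)) (C * r ^ m) r := by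
    refine ((hasDerivAt_pow (m + 1) r).const_mul c).congr_deriv ?_
    simp only [c, add_tsub_cancel_right, Nat.cast_add, Nat.cast_one]
    field_simp
  have hφ : ∀ r ≥ A, HasDerivAt (fun x => f x - c * x ^ (m + 1)) (f' r - C * r ^ m) r :=
    fun r hr => (hA r hr).1.sub (hpow r)
  have hmono : MonotoneOn (fun r => f r - c * r ^ (m + 1)) (Ici A) := by
    refine monotoneOn_of_hasDerivWithinAt_nonneg (f' := fun r => f' r - C * r ^ m)
      (convex_Ici A) (HasDerivAt.continuousOn fun r hr => hφ r hr) (fun r hr => ?_) (fun r hr => ?_)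
    · rw [interior_Ici] at hr ⊢
      exact (hφ r hr.le).hasDerivWithinAt
    · rw [interior_Ici] at hr
      linarith [(hA r hr.le).2]
  have htend : Tendsto (fun r : ℝ => c / 2 * r ^ (m + 1)) atTop atTop :=
    (tendsto_pow_atTop m.succ_ne_zero).const_mul_atTop (by positivity)
  refine ⟨c / 2, by positivity, ?_⟩
  filter_upwards [htend.eventually_ge_atTop (c * A ^ (m + 1) - f A), eventually_ge_atTop A]
    with r hr hAr
  have := hmono self_mem_Ici hAr hAr
  simp only at this
  linarith

theorem exists_pos_mul_pow_le_of_hasDerivAt_pow_mul (n : ℕ) {u u' F' : ℝ → ℝ} {v : ℝ}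
    (hv : 0 < v) (hvu : ∀ᶠ r in atTop, v ≤ u r) (hu : ∀ᶠ r in atTop, HasDerivAt u (u' r) r)
    (hF : ∀ᶠ r in atTop, HasDerivAt (fun x => x ^ n * u' x) (F' r) r)
    (hF' : ∀ᶠ r in atTop, r ^ n * u r ≤ F' r) (k : ℕ) :
    ∃ C > 0, ∀ᶠ r in atTop, C * r ^ (2 * k) ≤ u r := by
  induction k with
  | zero => exact ⟨v, hv, by simpa using hvu⟩
  | succ k ih =>
    obtain ⟨C, hC, hCu⟩ := ih
    have hF'_ge : ∀ᶠ r in atTop, C * r ^ (2 * k + n) ≤ F' r := by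
      filter_upwards [hCu, hF', eventually_ge_atTop 0] with r hr hr' hr0
      calc C * r ^ (2 * k + n) = r ^ n * (C * r ^ (2 * k)) := by ring
        _ ≤ r ^ n * u r := by gcongr
        _ ≤ F' r := hr'
    obtain ⟨C₁, hC₁, hF_ge⟩ := exists_pos_mul_pow_succ_le_of_hasDerivAt _ hC hF hF'_ge
    have hu'_ge : ∀ᶠ r in atTop, C₁ * r ^ (2 * k + 1) ≤ u' r := by
      filter_upwards [hF_ge, eventually_gt_atTop 0] with r hr hr0
      rw [show 2 * k + n + 1 = n + (2 * k + 1) by ring, pow_add, mul_left_comm] at hr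
      exact le_of_mul_le_mul_left hr (by positivity)
    obtain ⟨C₂, hC₂, hu_ge⟩ := exists_pos_mul_pow_succ_le_of_hasDerivAt _ hC₁ hu hu'_ge
    exact ⟨C₂, hC₂, by simpa [show 2 * (k + 1) = 2 * k + 1 + 1 by ring] using hu_ge⟩

theorem frequently_lt_of_radial_ode (n : ℕ) {u c : ℝ → ℝ} {θ d : ℝ} (hd : 0 < d)
    (hu : ∀ᶠ r in atTop, DifferentiableAt ℝ u r ∧ DifferentiableAt ℝ (deriv u) r)
    (hode : ∀ᶠ r in atTop, deriv (deriv u) r + n / r * deriv u r = c r * u r)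
    (hc : ∀ᶠ r in atTop, 1 ≤ c r)
    (hdecay : Tendsto (fun r => r ^ (-(θ / 2)) * u r) atTop (𝓝 0)) :
    ∃ᶠ r in atTop, u r < d := by
  by_contra! h
  have hF : ∀ᶠ r in atTop,
      HasDerivAt (fun x => x ^ n * deriv u x) (r ^ n * (c r * u r)) r := by
    filter_upwards [hu, hode, eventually_gt_atTop 0] with r hr hr' hr0
    refine ((hasDerivAt_pow n r).mul hr.2.hasDerivAt).congr_deriv ?_
    rw [← hr']
    rcases n with _ | n
    · simp
    · simp only [add_tsub_cancel_right, pow_succ]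
      field_simp
      push_cast
      ring
  have hF' : ∀ᶠ r in atTop, r ^ n * u r ≤ r ^ n * (c r * u r) := by
    filter_upwards [h, hc, eventually_ge_atTop 0] with r hr hr' hr0
    gcongr
    nlinarith
  obtain ⟨k, hk⟩ := exists_nat_gt (θ / 4)
  obtain ⟨C, hC, hCu⟩ := exists_pos_mul_pow_le_of_hasDerivAt_pow_mul n hd h
    (hu.mono fun r hr => hr.1.hasDerivAt) hF hF' k
  have hlower :
      ∀ᶠ r in atTop, C * r ^ ((2 * k : ℕ) - θ / 2 : ℝ) ≤ r ^ (-(θ / 2)) * u r := by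
    filter_upwards [hCu, eventually_gt_atTop 0] with r hr hr0
    rw [sub_eq_add_neg, rpow_add hr0, rpow_natCast]
    calc C * (r ^ (2 * k) * r ^ (-(θ / 2))) = r ^ (-(θ / 2)) * (C * r ^ (2 * k)) := by ring
      _ ≤ r ^ (-(θ / 2)) * u r := by gcongr
  have htop := tendsto_atTop_mono' _ hlower
    ((tendsto_rpow_atTop (by push_cast; linarith)).const_mul_atTop hC)
  exact not_tendsto_nhds_of_tendsto_atTop htop 0 hdecay

theorem sub_log_sq_mul_lt_sub_log_sq_mul {U W c : ℝ} (hW : 0 < W) (hWU : W < U)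
    (hc : log (U ^ 2) + 2 < c) : (c - log (W ^ 2)) * W < (c - log (U ^ 2)) * U := by
  have hU : 0 < U := hW.trans hWU
  have hlog : W * log (U ^ 2) - W * log (W ^ 2) ≤ 2 * (U - W) := by
    have h := log_le_sub_one_of_pos (div_pos hU hW)
    rw [log_div hU.ne' hW.ne', div_sub_one hW.ne', le_div_iff₀ hW] at h
    simp only [log_pow, Nat.cast_ofNat]
    linarith
  nlinarith [mul_pos (sub_pos.2 hWU) (sub_pos.2 hc)]

theorem neg_mul_sq_sub_le_mul_log_sub_log {A θ R r : ℝ} (hA : 0 < A) (hR : 1 ≤ R)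
    (hr : R ≤ r) :
    -(A * (r - R) ^ 2) - θ ^ 2 / (4 * A) ≤ θ * (log r - log R) := by
  have hR0 : 0 < R := by linarith
  have hlog_nonneg : 0 ≤ log r - log R := sub_nonneg.2 (log_le_log hR0 hr)
  have hlog_le : log r - log R ≤ r - R := by
    rw [← log_div (by linarith) hR0.ne']
    calc log (r / R) ≤ r / R - 1 := log_le_sub_one_of_pos (div_pos (by linarith) hR0)
      _ = (r - R) / R := by field_simp
      _ ≤ r - R := div_le_self (by linarith) hR
  have hsq : 0 ≤ (2 * A * (r - R) - |θ|) ^ 2 / (4 * A) := by positivity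
  have hexpand : (2 * A * (r - R) - |θ|) ^ 2 / (4 * A)
      = A * (r - R) ^ 2 - |θ| * (r - R) + θ ^ 2 / (4 * A) := by
    field_simp; rw [← sq_abs θ]; ring
  have habs : -(|θ| * (log r - log R)) ≤ θ * (log r - log R) := by
    rw [neg_le, ← neg_mul]; exact mul_le_mul_of_nonneg_right (neg_le_abs θ) hlog_nonneg
  nlinarith [mul_le_mul_of_nonneg_left hlog_le (abs_nonneg θ)]

theorem hasDerivAt_gaussian (K τ R r : ℝ) :
    HasDerivAt (fun x => K * exp (-(τ * (x - R) ^ 2)))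
      (-(2 * τ * (r - R)) * (K * exp (-(τ * (r - R) ^ 2)))) r := by
  refine ((((hasDerivAt_id' r).sub_const R).pow 2).const_mul τ).neg.exp.const_mul K
    |>.congr_deriv ?_
  simp only [Pi.neg_apply, Pi.pow_apply, Nat.cast_ofNat]; ring

theorem deriv_deriv_gaussian (K τ R r : ℝ) :
    deriv (deriv fun x => K * exp (-(τ * (x - R) ^ 2))) r
      = (4 * τ ^ 2 * (r - R) ^ 2 - 2 * τ) * (K * exp (-(τ * (r - R) ^ 2))) := by
  have hderiv : deriv (fun x => K * exp (-(τ * (x - R) ^ 2)))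
      = fun r => -(2 * τ * (r - R)) * (K * exp (-(τ * (r - R) ^ 2))) :=
    funext fun r => (hasDerivAt_gaussian K τ R r).deriv
  rw [hderiv]
  refine ((((hasDerivAt_id' r).sub_const R).const_mul (2 * τ)).neg.mul
    (hasDerivAt_gaussian K τ R r)).deriv.trans ?_
  simp only [Pi.neg_apply]
  ring

theorem tendsto_mul_exp_sq_of_le_gaussian {u : ℝ → ℝ} {K τ τ' R : ℝ} (hτ : τ' < τ)
    (hnonneg : ∀ᶠ r in atTop, 0 ≤ u r)
    (hle : ∀ᶠ r in atTop, u r ≤ K * exp (-(τ * (r - R) ^ 2))) :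
    Tendsto (fun r => u r * exp (τ' * r ^ 2)) atTop (𝓝 0) := by
  have hexponent :
      Tendsto (fun r => r * ((τ' - τ) * r + 2 * τ * R) - τ * R ^ 2) atTop atBot :=
    tendsto_atBot_add_const_right _ _ <| tendsto_id.atTop_mul_atBot₀ <|
      tendsto_atBot_add_const_right _ _ <| tendsto_id.const_mul_atTop_of_neg (by linarith)
  have hbound :
      Tendsto (fun r => K * exp (-(τ * (r - R) ^ 2) + τ' * r ^ 2)) atTop (𝓝 (K * 0)) :=
    ((tendsto_exp_atBot.comp hexponent).const_mul K).congr fun r => by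
      rw [Function.comp_apply]; congr 2; ring
  rw [mul_zero] at hbound
  refine squeeze_zero' ?_ ?_ hbound
  · filter_upwards [hnonneg] with r hr using by positivity
  · filter_upwards [hle] with r hr
    rw [exp_add, ← mul_assoc]
    gcongr

theorem eventually_log_sq_le_of_tendsto_rpow_mul {u : ℝ → ℝ} {θ : ℝ}
    (hpos : ∀ᶠ r in atTop, 0 < u r)
    (hdecay : Tendsto (fun r => r ^ (-(θ / 2)) * u r) atTop (𝓝 0)) (K : ℝ) :
    ∀ᶠ r in atTop, log (u r ^ 2) ≤ θ * log r - K := by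
  filter_upwards [hdecay.eventually_lt_const (exp_pos (-K / 2)), hpos, eventually_gt_atTop 0]
    with r hr hur hr0
  have h := log_lt_log (by positivity) hr
  rw [log_mul (by positivity) hur.ne', log_rpow hr0, log_exp] at h
  rw [log_pow]
  push_cast
  linarith

/-- `3` may be any constant above `2`, which makes `s ↦ (V r - log s²) s` increasing on `(0, u r]`;
`θ² / (4A)`, with `A = 2τ - 4τ²`, absorbs `θ log (r / R)` into the slack `A (r - R)²` of the
Gaussian. -/
theorem le_gaussian_of_radial_ode {u V : ℝ → ℝ} {n θ M τ R : ℝ} (hn : 0 ≤ n) (hτ : 0 < τ)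
    (hτ' : τ < 1 / 2) (hR : 1 ≤ R) (hu : ContinuousOn u (Ici R))
    (hu2 : ContDiffOn ℝ 2 u (Ioi R)) (hpos : ∀ r ≥ R, 0 < u r)
    (hode : ∀ r ≥ R, deriv (deriv u) r + n / r * deriv u r = (V r - log (u r ^ 2)) * u r)
    (hV : ∀ r ≥ R, M ≤ V r - θ * log r)
    (hlog : ∀ r ≥ R,
      log (u r ^ 2) ≤ θ * log r - (3 - M + θ ^ 2 / (4 * (2 * τ - 4 * τ ^ 2))))
    (hsmall : ∀ d > 0, ∃ᶠ r in atTop, u r < d) :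
    ∀ r ≥ R, u r ≤ u R * exp (-(τ * (r - R) ^ 2)) := by
  set A := 2 * τ - 4 * τ ^ 2
  have hA : 0 < A := by nlinarith
  have huR := hpos R le_rfl
  refine le_of_deriv_deriv_lt hu hu2 (by fun_prop) (by simp) (fun d hd => ?_) ?_
  · refine (hsmall d hd).mono fun r hr => ?_
    nlinarith [mul_pos huR (exp_pos (-(τ * (r - R) ^ 2)))]
  intro r hr hwu hderiv
  set W := u R * exp (-(τ * (r - R) ^ 2))
  have hW : 0 < W := by positivity
  have hlogW : log (W ^ 2) = log (u R ^ 2) - 2 * τ * (r - R) ^ 2 := by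
    rw [mul_pow, ← exp_nat_mul, log_mul (by positivity) (exp_pos _).ne', log_exp]
    push_cast; ring
  have hdrift : 0 ≤ -(n / r * deriv u r) := by
    have : 0 ≤ n / r * (2 * τ * (r - R) * W) := by
      have : 0 < r := by linarith
      have : 0 ≤ r - R := by linarith
      positivity
    rw [hderiv, (hasDerivAt_gaussian _ τ R r).deriv]
    linarith
  have hgap : log (u r ^ 2) + 2 < V r := by
    linarith [hV r hr.le, hlog r hr.le, show 0 ≤ θ ^ 2 / (4 * A) by positivity]
  have hbarrier : 4 * τ ^ 2 * (r - R) ^ 2 - 2 * τ ≤ V r - log (W ^ 2) := by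
    have hslack : A * (r - R) ^ 2 = 2 * τ * (r - R) ^ 2 - 4 * τ ^ 2 * (r - R) ^ 2 := by ring
    linarith [hV r hr.le, hlog R le_rfl, neg_mul_sq_sub_le_mul_log_sub_log (θ := θ) hA hR hr.le]
  calc deriv (deriv fun x => u R * exp (-(τ * (x - R) ^ 2))) r
      = (4 * τ ^ 2 * (r - R) ^ 2 - 2 * τ) * W := deriv_deriv_gaussian _ _ _ _
    _ ≤ (V r - log (W ^ 2)) * W := mul_le_mul_of_nonneg_right hbarrier hW.le
    _ < (V r - log (u r ^ 2)) * u r := sub_log_sq_mul_lt_sub_log_sq_mul hW hwu hgap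
    _ ≤ deriv (deriv u) r := by linarith [hode r hr.le]

theorem eventually_radial_ode_of_hasCompactSupport {N : ℕ} {V a b u : ℝ → ℝ} {δ : ℝ}
    (hN : 1 ≤ N) (ha : HasCompactSupport a) (hb : HasCompactSupport b)
    (hode : ∀ r : ℝ, 0 < r →
      deriv (deriv u) r + ((N : ℝ) - 1) / r * deriv u r
        - (V r + δ * a r) * u r + (1 + δ * b r) * (u r * log (u r ^ 2)) = 0) :
    ∀ᶠ r in atTop, deriv (deriv u) r + ((N - 1 : ℕ) : ℝ) / r * deriv u r
      = (V r - log (u r ^ 2)) * u r := by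
  filter_upwards [ha.eventually_eq_zero_atTop, hb.eventually_eq_zero_atTop,
    eventually_gt_atTop 0] with r har hbr hr
  have := hode r hr
  simp only [har, hbr, mul_zero, add_zero, one_mul] at this
  rw [Nat.cast_sub hN, Nat.cast_one]
  linarith

theorem sol_P3_gaussian_decay_general (N : ℕ) (hN : 2 ≤ N) (V a b : ℝ → ℝ) (δ θ : ℝ)
    (hVab : CondVab a b) (hθ : MemTheta N V θ)
    (u : ℝ → ℝ)
    (hu : SolP3 N (fun r => V r + δ * a r) (fun r => 1 + δ * b r) θ u) :
    ∀ τ : ℝ, 0 < τ → τ < 1 / 2 →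
      Filter.Tendsto (fun r : ℝ => u r * Real.exp (τ * r ^ 2)) Filter.atTop (nhds 0) := by
  obtain ⟨hcont, hC2, hode, hpos, -, hdecay⟩ := hu
  obtain ⟨-, ha, -, hb, -, -⟩ := hVab
  obtain ⟨-, M, hM⟩ := hθ
  intro τ' hτ'0 hτ'
  have hode' := eventually_radial_ode_of_hasCompactSupport (by omega) ha hb hode
  have hlog := eventually_log_sq_le_of_tendsto_rpow_mul (eventually_gt_atTop 0 |>.mono hpos) hdecay
  have hsmall (d : ℝ) (hd : 0 < d) : ∃ᶠ r in atTop, u r < d := by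
    refine frequently_lt_of_radial_ode (N - 1) hd ?_ hode' ?_ hdecay
    · filter_upwards [eventually_gt_atTop 0] with r hr
      exact ⟨(hC2.differentiableOn two_ne_zero).differentiableAt (Ioi_mem_nhds hr),
        hC2.differentiableAt_deriv isOpen_Ioi hr⟩
    · filter_upwards [hlog (1 - M), hM] with r h₁ h₂
      linarith
  obtain ⟨τ, hτ'τ, hτ⟩ : ∃ τ, τ' < τ ∧ τ < 1 / 2 := ⟨(τ' + 1 / 2) / 2, by linarith, by linarith⟩
  obtain ⟨R, hR⟩ := eventually_atTop.1 <| hode'.and <| hM.and <|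
    (hlog (3 - M + θ ^ 2 / (4 * (2 * τ - 4 * τ ^ 2)))).and (eventually_ge_atTop 1)
  have hR1 : 1 ≤ R := (hR R le_rfl).2.2.2
  have hgauss := le_gaussian_of_radial_ode (by positivity) (hτ'0.trans hτ'τ) hτ hR1
    (hcont.mono (Ici_subset_Ici.2 (by linarith))) (hC2.mono (Ioi_subset_Ioi (by linarith)))
    (fun r hr => hpos r (by linarith)) (fun r hr => (hR r hr).1) (fun r hr => (hR r hr).2.1)
    (fun r hr => (hR r hr).2.2.1) hsmall
  exact tendsto_mul_exp_sq_of_le_gaussian hτ'τ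
    (eventually_gt_atTop 0 |>.mono fun r hr => (hpos r hr).le) (eventually_atTop.2 ⟨R, hgauss⟩)

/-- Let `u` be a solution of problem (P3). Then for every `τ ∈ (0, 1/2)`,
`u(r) e^{τ r²} → 0` as `r → ∞`. -/
theorem sol_P3_gaussian_decay (N : ℕ) (hN : 2 ≤ N) (V a b : ℝ → ℝ) (δ θ : ℝ)
    (hV1 : CondV1 N V) (hVab : CondVab a b) (hδ : 0 ≤ δ) (hθ : MemTheta N V θ)
    (u : ℝ → ℝ)
    (hu : SolP3 N (fun r => V r + δ * a r) (fun r => 1 + δ * b r) θ u) :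
    ∀ τ : ℝ, 0 < τ → τ < 1 / 2 →
      Filter.Tendsto (fun r : ℝ => u r * Real.exp (τ * r ^ 2)) Filter.atTop (nhds 0) :=
  sol_P3_gaussian_decay_general N hN V a b δ θ hVab hθ u hu
end
end

section
/- Let u be a solution of problem (P3). Then there exists R > 0 such that u'(r) < 0 for all r ≥ R; moreover lim_{r→∞} r^{N−1}u'(r) = 0 and liminf_{r→∞} r^{N−1}V_δ(r)u(r) = 0. -/
open Real Filter Set MeasureTheory

noncomputable section

open Topology

/-! Beyond the supports of `a` and `b` the equation reads
`(r ^ n u')' = r ^ n u (V - log u²)` with `n = N - 1`, and `u = o(r ^ (θ / 2))` together with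
`θ ∈ Θ` gives `V - log u² ≥ 1` for large `r`; so the flux `g = r ^ n u'` is increasing with
`g' ≥ r ^ n u`. If `g` ever became nonnegative, `u` would increase, and integrating
`g' ≥ r ^ n u` twice, again and again, would make `u` grow faster than every power of `r`;
hence `g < 0`. If `g ≤ c < 0` throughout, comparing `u` at `r` and `2 r` gives
`r ^ n u(r) ≥ |c| 2⁻ⁿ r`, which forces `g → ∞`; hence `g → 0`. Integrating
`g' ≥ (r / 2) ^ n u(r)` over `[r / 2, r]` gives
`r ^ (n + 1) u(r) ≤ 2 ^ (n + 1) (g(r) - g(r / 2)) → 0`, which with `V ≥ -K r` bounds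
`r ^ n V u` from below by a null function, while `r ^ n V u ≤ g'` once `u ≤ 1`, and `g'` cannot
stay above a positive constant because `g` stays negative. -/

lemma mul_sub_le_sub_of_le_hasDerivAt {φ φ' : ℝ → ℝ} {C x y : ℝ} (hxy : x ≤ y)
    (hφ : ∀ s ∈ Icc x y, HasDerivAt φ (φ' s) s) (hC : ∀ s ∈ Icc x y, C ≤ φ' s) :
    C * (y - x) ≤ φ y - φ x :=
  (convex_Icc x y).mul_sub_le_image_sub_of_le_deriv
    (fun s hs => (hφ s hs).continuousAt.continuousWithinAt)
    (fun s hs => (hφ s (interior_subset hs)).differentiableAt.differentiableWithinAt)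
    (fun s hs => (hφ s (interior_subset hs)).deriv ▸ hC s (interior_subset hs))
    x (left_mem_Icc.2 hxy) y (right_mem_Icc.2 hxy) hxy

lemma sub_le_mul_sub_of_hasDerivAt_le {φ φ' : ℝ → ℝ} {C x y : ℝ} (hxy : x ≤ y)
    (hφ : ∀ s ∈ Icc x y, HasDerivAt φ (φ' s) s) (hC : ∀ s ∈ Icc x y, φ' s ≤ C) :
    φ y - φ x ≤ C * (y - x) :=
  (convex_Icc x y).image_sub_le_mul_sub_of_deriv_le
    (fun s hs => (hφ s hs).continuousAt.continuousWithinAt)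
    (fun s hs => (hφ s (interior_subset hs)).differentiableAt.differentiableWithinAt)
    (fun s hs => (hφ s (interior_subset hs)).deriv ▸ hC s (interior_subset hs))
    x (left_mem_Icc.2 hxy) y (right_mem_Icc.2 hxy) hxy

lemma tendsto_atTop_of_pos_le_hasDerivAt {φ φ' : ℝ → ℝ} {A c : ℝ} (hc : 0 < c)
    (hφ : ∀ r, A ≤ r → HasDerivAt φ (φ' r) r) (hle : ∀ r, A ≤ r → c ≤ φ' r) :
    Tendsto φ atTop atTop := by
  have hlin : Tendsto (fun r => φ A + c * (r - A)) atTop atTop :=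
    tendsto_atTop_add_const_left _ _
      ((tendsto_atTop_add_const_right _ _ tendsto_id).const_mul_atTop hc)
  refine tendsto_atTop_mono' _ ?_ hlin
  filter_upwards [eventually_ge_atTop A] with r hr
  linarith [mul_sub_le_sub_of_le_hasDerivAt hr (fun s hs => hφ s hs.1) fun s hs => hle s hs.1]

/-- Integrating over `[r / 2, r]` only, so that no lower-order term has to be absorbed. -/
lemma mul_half_pow_succ_le_of_pow_le_hasDerivAt {φ φ' : ℝ → ℝ} {R C : ℝ} {k : ℕ}
    (hR : 0 ≤ R) (hC : 0 ≤ C) (hφ : ∀ s, R ≤ s → HasDerivAt φ (φ' s) s)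
    (hφ₀ : ∀ s, R ≤ s → 0 ≤ φ s) (hle : ∀ s, R ≤ s → C * s ^ k ≤ φ' s) {r : ℝ}
    (hr : 2 * R ≤ r) : C * (r / 2) ^ (k + 1) ≤ φ r := by
  have hR2 : R ≤ r / 2 := by linarith
  have hincr := mul_sub_le_sub_of_le_hasDerivAt (C := C * (r / 2) ^ k)
    (half_le_self (by linarith)) (fun s hs => hφ s (hR2.trans hs.1))
    (fun s hs => (mul_le_mul_of_nonneg_left (pow_le_pow_left₀ (by linarith) hs.1 k) hC).trans
      (hle s (hR2.trans hs.1)))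
  calc C * (r / 2) ^ (k + 1) = C * (r / 2) ^ k * (r - r / 2) := by ring
    _ ≤ φ r - φ (r / 2) := hincr
    _ ≤ φ r := by linarith [hφ₀ _ hR2]

lemma liminf_eq_of_tendsto_le_of_frequently_lt {α : Type*} {l : Filter α} [l.NeBot]
    {F lo : α → ℝ} {y : ℝ} (hlo : Tendsto lo l (𝓝 y)) (hle : ∀ᶠ x in l, lo x ≤ F x)
    (hfreq : ∀ c > y, ∃ᶠ x in l, F x < c) : liminf F l = y := by
  have hbdd : l.IsBoundedUnder (· ≥ ·) F := hlo.isBoundedUnder_ge.mono_ge hle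
  have hcobdd : l.IsCoboundedUnder (· ≥ ·) F :=
    IsCoboundedUnder.of_frequently_le ((hfreq (y + 1) (by linarith)).mono fun _ => le_of_lt)
  refine le_antisymm ((liminf_le_iff hcobdd hbdd).2 hfreq) ((le_liminf_iff hcobdd hbdd).2 ?_)
  intro c hc
  filter_upwards [hlo.eventually (lt_mem_nhds hc), hle] with x h₁ h₂
  exact h₁.trans_le h₂

lemma HasCompactSupport.eventually_atTop_eq_zero {α M : Type*} [TopologicalSpace α]
    [LinearOrder α] [NoMaxOrder α] [ClosedIciTopology α] [Zero M] {f : α → M}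
    (hf : HasCompactSupport f) : ∀ᶠ x in atTop, f x = 0 :=
  Filter.mem_of_superset (atTop_le_cocompact hf.isCompact.compl_mem_cocompact)
    fun _ hx => image_eq_zero_of_notMem_tsupport hx

structure IsRadialSupersolution (n : ℕ) (u u' f : ℝ → ℝ) (A : ℝ) : Prop where
  pos_radius : 0 < A
  hasDerivAt : ∀ r, A ≤ r → HasDerivAt u (u' r) r
  hasDerivAt_flux : ∀ r, A ≤ r → HasDerivAt (fun s => s ^ n * u' s) (f r) r
  pos : ∀ r, A ≤ r → 0 < u r
  pow_mul_le : ∀ r, A ≤ r → r ^ n * u r ≤ f r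

namespace IsRadialSupersolution

variable {n : ℕ} {u u' f : ℝ → ℝ} {A : ℝ}

lemma radius_pos (h : IsRadialSupersolution n u u' f A) {r : ℝ} (hr : A ≤ r) : 0 < r :=
  h.pos_radius.trans_le hr

lemma flux_strictMonoOn (h : IsRadialSupersolution n u u' f A) :
    StrictMonoOn (fun r => r ^ n * u' r) (Ici A) :=
  strictMonoOn_of_hasDerivWithinAt_pos (convex_Ici A)
    (fun r hr => (h.hasDerivAt_flux r hr).continuousAt.continuousWithinAt)
    (fun r hr => (h.hasDerivAt_flux r (interior_subset hr)).hasDerivWithinAt)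
    fun r hr => have hr : A ≤ r := interior_subset hr
      (mul_pos (pow_pos (h.radius_pos hr) n) (h.pos r hr)).trans_le (h.pow_mul_le r hr)

lemma deriv_neg_of_flux_neg (h : IsRadialSupersolution n u u' f A) {r : ℝ} (hr : A ≤ r)
    (hflux : r ^ n * u' r < 0) : u' r < 0 :=
  neg_of_mul_neg_right hflux (pow_pos (h.radius_pos hr) n).le

lemma frequently_lt_of_flux_neg (h : IsRadialSupersolution n u u' f A)
    (hneg : ∀ r, A ≤ r → r ^ n * u' r < 0) {c : ℝ} (hc : 0 < c) : ∃ᶠ r in atTop, f r < c := by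
  by_contra! hge
  obtain ⟨R, hR⟩ := (hge.and (eventually_ge_atTop A)).exists_forall_of_atTop
  have htop := tendsto_atTop_of_pos_le_hasDerivAt hc
    (fun r hr => h.hasDerivAt_flux r (hR r hr).2) fun r hr => (hR r hr).1
  obtain ⟨r, hr, hpos⟩ := ((eventually_ge_atTop A).and (htop.eventually_gt_atTop 0)).exists
  exact lt_asymm (hneg r hr) hpos

lemma pow_le_of_pow_le_of_flux_nonneg (h : IsRadialSupersolution n u u' f A) {R C : ℝ}
    {j : ℕ} (hAR : A ≤ R) (hC : 0 < C) (hflux : ∀ r, R ≤ r → 0 ≤ r ^ n * u' r)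
    (hu : ∀ r, R ≤ r → C * r ^ j ≤ u r) {r : ℝ} (hr : 4 * R ≤ r) :
    C / 2 ^ (n + 2 * j + 3) * r ^ (j + 2) ≤ u r := by
  have hR : 0 < R := h.radius_pos hAR
  have hflux_ge : ∀ s, 2 * R ≤ s → C * (s / 2) ^ (n + j + 1) ≤ s ^ n * u' s := fun s hs =>
    mul_half_pow_succ_le_of_pow_le_hasDerivAt hR.le hC.le
      (fun t ht => h.hasDerivAt_flux t (hAR.trans ht)) hflux
      (fun t ht => calc C * t ^ (n + j) = t ^ n * (C * t ^ j) := by ring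
        _ ≤ t ^ n * u t :=
          mul_le_mul_of_nonneg_left (hu t ht) (pow_pos (h.radius_pos (hAR.trans ht)) n).le
        _ ≤ f t := h.pow_mul_le t (hAR.trans ht)) hs
  have hderiv_ge : ∀ s, 2 * R ≤ s → C / 2 ^ (n + j + 1) * s ^ (j + 1) ≤ u' s := by
    intro s hs
    have hs₀ : 0 < s := by linarith
    refine le_of_mul_le_mul_left ?_ (pow_pos hs₀ n)
    calc s ^ n * (C / 2 ^ (n + j + 1) * s ^ (j + 1)) = C * (s / 2) ^ (n + j + 1) := by
          rw [div_pow]; ring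
      _ ≤ s ^ n * u' s := hflux_ge s hs
  calc C / 2 ^ (n + 2 * j + 3) * r ^ (j + 2)
        = C / 2 ^ (n + j + 1) * (r / 2) ^ (j + 1 + 1) := by rw [div_pow]; field_simp; ring
    _ ≤ u r := mul_half_pow_succ_le_of_pow_le_hasDerivAt (by linarith) (by positivity)
        (fun s hs => h.hasDerivAt s (by linarith)) (fun s hs => (h.pos s (by linarith)).le)
        hderiv_ge (by linarith)

lemma exists_pow_le_of_flux_nonneg (h : IsRadialSupersolution n u u' f A) {r₁ : ℝ}
    (hr₁ : A ≤ r₁) (hflux : 0 ≤ r₁ ^ n * u' r₁) (k : ℕ) :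
    ∃ C > 0, ∃ R, r₁ ≤ R ∧ ∀ r, R ≤ r → C * r ^ (2 * k) ≤ u r := by
  have hflux' : ∀ r, r₁ ≤ r → 0 ≤ r ^ n * u' r := fun r hr =>
    hflux.trans (h.flux_strictMonoOn.monotoneOn hr₁ (hr₁.trans hr) hr)
  induction k with
  | zero =>
    refine ⟨u r₁, h.pos r₁ hr₁, r₁, le_rfl, fun r hr => ?_⟩
    have hmono := mul_sub_le_sub_of_le_hasDerivAt (C := 0) hr
      (fun s hs => h.hasDerivAt s (hr₁.trans hs.1))
      (fun s hs => nonneg_of_mul_nonneg_right (hflux' s hs.1)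
        (pow_pos (h.radius_pos (hr₁.trans hs.1)) n))
    simp only [mul_zero, pow_zero, mul_one]
    linarith
  | succ k ih =>
    obtain ⟨C, hC, R, hR, hu⟩ := ih
    have hR₀ : 0 < R := h.radius_pos (hr₁.trans hR)
    refine ⟨C / 2 ^ (n + 2 * (2 * k) + 3), by positivity, 4 * R, by linarith, fun r hr => ?_⟩
    rw [show 2 * (k + 1) = 2 * k + 2 by ring]
    exact h.pow_le_of_pow_le_of_flux_nonneg (hr₁.trans hR) hC
      (fun s hs => hflux' s (hR.trans hs)) hu hr

lemma flux_neg (h : IsRadialSupersolution n u u' f A) {m : ℕ}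
    (hbound : ∀ᶠ r in atTop, u r ≤ r ^ m) {r : ℝ} (hr : A ≤ r) : r ^ n * u' r < 0 := by
  by_contra! hflux
  obtain ⟨C, hC, R, -, hR⟩ := h.exists_pow_le_of_flux_nonneg hr hflux (m + 1)
  have htop : Tendsto (fun r : ℝ => C * r ^ (m + 1)) atTop atTop :=
    (tendsto_pow_atTop (by omega)).const_mul_atTop hC
  obtain ⟨s, hs₁, hsR, hsu, hs⟩ := ((eventually_ge_atTop 1).and ((eventually_ge_atTop R).and
    (hbound.and (htop.eventually_gt_atTop 1)))).exists
  refine lt_irrefl (s ^ m) ?_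
  calc s ^ m ≤ 1 * s ^ (m + 1) := by rw [one_mul]; exact pow_le_pow_right₀ hs₁ (by omega)
    _ < C * s ^ (m + 1) * s ^ (m + 1) := by gcongr
    _ = C * s ^ (2 * (m + 1)) := by ring
    _ ≤ u s := hR s hsR
    _ ≤ s ^ m := hsu

lemma pow_mul_ge_of_flux_le (h : IsRadialSupersolution n u u' f A) {c : ℝ} (hc : c < 0)
    (hle : ∀ r, A ≤ r → r ^ n * u' r ≤ c) {r : ℝ} (hr : A ≤ r) :
    -c / 2 ^ n * r ≤ r ^ n * u r := by
  have hr₀ := h.radius_pos hr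
  have hderiv : ∀ s ∈ Icc r (2 * r), u' s ≤ c / (2 * r) ^ n := by
    intro s hs
    have hAs : A ≤ s := hr.trans hs.1
    have hneg : u' s < 0 := h.deriv_neg_of_flux_neg hAs ((hle s hAs).trans_lt hc)
    rw [le_div_iff₀ (by positivity)]
    calc u' s * (2 * r) ^ n ≤ u' s * s ^ n :=
          mul_le_mul_of_nonpos_left (pow_le_pow_left₀ (h.radius_pos hAs).le hs.2 n) hneg.le
      _ = s ^ n * u' s := mul_comm _ _
      _ ≤ c := hle s hAs
  have hdrop := sub_le_mul_sub_of_hasDerivAt_le (by linarith : r ≤ 2 * r)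
    (fun s hs => h.hasDerivAt s (hr.trans hs.1)) hderiv
  have hu : -c / (2 * r) ^ n * r ≤ u r := by
    have hu₂ := h.pos (2 * r) (by linarith)
    have hslope : c / (2 * r) ^ n * (2 * r - r) = -(-c / (2 * r) ^ n * r) := by ring
    linarith
  calc -c / 2 ^ n * r = r ^ n * (-c / (2 * r) ^ n * r) := by rw [mul_pow]; field_simp
    _ ≤ r ^ n * u r := mul_le_mul_of_nonneg_left hu (by positivity)

lemma tendsto_flux_zero (h : IsRadialSupersolution n u u' f A)
    (hneg : ∀ r, A ≤ r → r ^ n * u' r < 0) :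
    Tendsto (fun r => r ^ n * u' r) atTop (𝓝 0) := by
  refine tendsto_order.2 ⟨fun c hc => ?_,
    fun c hc => (eventually_ge_atTop A).mono fun r hr => (hneg r hr).trans hc⟩
  by_contra hnot
  have hle : ∀ r, A ≤ r → r ^ n * u' r ≤ c := by
    intro r hr
    obtain ⟨s, hs, hrs⟩ :=
      ((not_eventually.1 hnot).and_eventually (eventually_ge_atTop r)).exists
    exact (h.flux_strictMonoOn.monotoneOn hr (hr.trans hrs) hrs).trans (not_lt.1 hs)
  have hc' : 0 < -c / 2 ^ n := div_pos (neg_pos.2 hc) (by positivity)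
  obtain ⟨r, hlt, hr⟩ := ((h.frequently_lt_of_flux_neg hneg
    (mul_pos hc' h.pos_radius)).and_eventually (eventually_ge_atTop A)).exists
  have hge := (mul_le_mul_of_nonneg_left hr hc'.le).trans (h.pow_mul_ge_of_flux_le hc hle hr)
  linarith [h.pow_mul_le r hr]

lemma antitoneOn (h : IsRadialSupersolution n u u' f A)
    (hneg : ∀ r, A ≤ r → r ^ n * u' r < 0) : AntitoneOn u (Ici A) :=
  antitoneOn_of_hasDerivWithinAt_nonpos (convex_Ici A)
    (fun r hr => (h.hasDerivAt r hr).continuousAt.continuousWithinAt)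
    (fun r hr => (h.hasDerivAt r (interior_subset hr)).hasDerivWithinAt)
    fun r hr => have hr : A ≤ r := interior_subset hr
      (h.deriv_neg_of_flux_neg hr (hneg r hr)).le

lemma tendsto_pow_succ_mul_zero (h : IsRadialSupersolution n u u' f A)
    (hneg : ∀ r, A ≤ r → r ^ n * u' r < 0) :
    Tendsto (fun r => r ^ (n + 1) * u r) atTop (𝓝 0) := by
  have hflux := h.tendsto_flux_zero hneg
  have hdiff : Tendsto (fun r => 2 ^ (n + 1) * (r ^ n * u' r - (r / 2) ^ n * u' (r / 2)))
      atTop (𝓝 0) := by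
    simpa using (hflux.sub (hflux.comp (tendsto_id.atTop_div_const two_pos))).const_mul
      ((2 : ℝ) ^ (n + 1))
  refine tendsto_of_tendsto_of_tendsto_of_le_of_le' tendsto_const_nhds hdiff ?_ ?_
  · filter_upwards [eventually_ge_atTop A] with r hr
    exact (mul_pos (pow_pos (h.radius_pos hr) _) (h.pos r hr)).le
  · filter_upwards [eventually_ge_atTop (2 * A)] with r hr
    have hA2 : A ≤ r / 2 := by linarith
    have hAr : A ≤ r := by linarith [h.pos_radius]
    have hr₀ : 0 < r := h.radius_pos hAr
    have hlow : ∀ s ∈ Icc (r / 2) r, (r / 2) ^ n * u r ≤ f s := by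
      intro s hs
      have hAs : A ≤ s := hA2.trans hs.1
      calc (r / 2) ^ n * u r ≤ s ^ n * u s :=
            mul_le_mul (pow_le_pow_left₀ (by positivity) hs.1 n)
              (h.antitoneOn hneg hAs (hA2.trans (half_le_self hr₀.le)) hs.2)
              (h.pos r hAr).le (pow_pos (h.radius_pos hAs) n).le
        _ ≤ f s := h.pow_mul_le s hAs
    have hincr := mul_sub_le_sub_of_le_hasDerivAt (half_le_self hr₀.le)
      (fun s hs => h.hasDerivAt_flux s (hA2.trans hs.1)) hlow
    calc r ^ (n + 1) * u r = 2 ^ (n + 1) * ((r / 2) ^ n * u r * (r - r / 2)) := by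
          rw [div_pow]; field_simp; ring
      _ ≤ _ := mul_le_mul_of_nonneg_left hincr (by positivity)

lemma liminf_pow_mul_mul_eq_zero {V : ℝ → ℝ} {K : ℝ}
    (h : IsRadialSupersolution n u u' (fun r => r ^ n * (u r * (V r - log (u r ^ 2)))) A)
    (hneg : ∀ r, A ≤ r → r ^ n * u' r < 0) (hV : ∀ᶠ r in atTop, -(K * r) ≤ V r) :
    liminf (fun r => r ^ n * (V r * u r)) atTop = 0 := by
  have hdecay := h.tendsto_pow_succ_mul_zero hneg
  refine liminf_eq_of_tendsto_le_of_frequently_lt (lo := fun r => -(K * (r ^ (n + 1) * u r)))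
    (by simpa using (hdecay.const_mul K).neg) ?_ fun c hc => ?_
  · filter_upwards [hV, eventually_ge_atTop A] with r hVr hr
    have hw : 0 ≤ r ^ n * u r := (mul_pos (pow_pos (h.radius_pos hr) n) (h.pos r hr)).le
    calc -(K * (r ^ (n + 1) * u r)) = -(K * r) * (r ^ n * u r) := by ring
      _ ≤ V r * (r ^ n * u r) := mul_le_mul_of_nonneg_right hVr hw
      _ = r ^ n * (V r * u r) := by ring
  · have hsmall : ∀ᶠ r in atTop, u r ≤ 1 := by
      filter_upwards [hdecay.eventually (ge_mem_nhds one_pos), eventually_ge_atTop A,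
        eventually_ge_atTop 1] with r hur hr hr₁
      exact (le_mul_of_one_le_left (h.pos r hr).le (one_le_pow₀ hr₁)).trans hur
    refine ((h.frequently_lt_of_flux_neg hneg hc).and_eventually
      (hsmall.and (eventually_ge_atTop A))).mono fun r ⟨hf, hu₁, hr⟩ => lt_of_le_of_lt ?_ hf
    have hu₀ := h.pos r hr
    have hlog : log (u r ^ 2) ≤ 0 := log_nonpos (sq_nonneg _) (pow_le_one₀ hu₀.le hu₁)
    have hw : 0 ≤ r ^ n * u r := (mul_pos (pow_pos (h.radius_pos hr) n) hu₀).le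
    nlinarith [mul_nonneg hw (neg_nonneg.2 hlog)]

end IsRadialSupersolution

lemma eventually_one_le_sub_log_sq {V u : ℝ → ℝ} {θ M : ℝ}
    (hM : ∀ᶠ r in atTop, M ≤ V r - θ * log r)
    (hu : Tendsto (fun r => r ^ (-(θ / 2)) * u r) atTop (𝓝 0))
    (hpos : ∀ r, 0 < r → 0 < u r) : ∀ᶠ r in atTop, 1 ≤ V r - log (u r ^ 2) := by
  filter_upwards [hM, hu.eventually (gt_mem_nhds (exp_pos ((M - 1) / 2))),
    eventually_gt_atTop 0] with r hVr hur hr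
  have hlog : log (r ^ (-(θ / 2)) * u r) < (M - 1) / 2 :=
    (log_lt_iff_lt_exp (mul_pos (rpow_pos_of_pos hr _) (hpos r hr))).2 hur
  rw [log_mul (rpow_pos_of_pos hr _).ne' (hpos r hr).ne', log_rpow hr] at hlog
  rw [log_pow]
  push_cast
  linarith

lemma exists_eventually_le_pow_of_tendsto_rpow_neg_mul {u : ℝ → ℝ} {θ : ℝ}
    (hu : Tendsto (fun r => r ^ (-(θ / 2)) * u r) atTop (𝓝 0)) :
    ∃ m : ℕ, ∀ᶠ r in atTop, u r ≤ r ^ m := by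
  refine ⟨⌈θ / 2⌉₊, ?_⟩
  filter_upwards [hu.eventually (ge_mem_nhds one_pos), eventually_ge_atTop 1] with r hur hr
  have hr₀ : 0 < r := by linarith
  calc u r = r ^ (θ / 2) * (r ^ (-(θ / 2)) * u r) := by
        rw [← mul_assoc, ← rpow_add hr₀, add_neg_cancel, rpow_zero, one_mul]
    _ ≤ r ^ (θ / 2) * 1 := mul_le_mul_of_nonneg_left hur (rpow_nonneg hr₀.le _)
    _ ≤ r ^ (⌈θ / 2⌉₊ : ℝ) := by
        rw [mul_one]; exact rpow_le_rpow_of_exponent_le hr (Nat.le_ceil _)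
    _ = r ^ ⌈θ / 2⌉₊ := rpow_natCast _ _

lemma eventually_neg_mul_le_of_le_sub_mul_log {V : ℝ → ℝ} {θ M : ℝ}
    (hM : ∀ᶠ r in atTop, M ≤ V r - θ * log r) :
    ∀ᶠ r in atTop, -((|θ| + |M|) * r) ≤ V r := by
  filter_upwards [hM, eventually_ge_atTop 1] with r hVr hr
  have hlog₀ := log_nonneg hr
  have hθ : -(|θ| * r) ≤ θ * log r := by
    nlinarith [neg_abs_le θ, mul_le_mul_of_nonneg_left (log_le_self (by linarith)) (abs_nonneg θ)]
  nlinarith [neg_abs_le M, le_mul_of_one_le_right (abs_nonneg M) hr]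

lemma SolP3.isRadialSupersolution {n : ℕ} {V a b u : ℝ → ℝ} {δ θ M : ℝ}
    (hu : SolP3 (n + 1) (fun r => V r + δ * a r) (fun r => 1 + δ * b r) θ u)
    (ha : ∀ᶠ r in atTop, a r = 0) (hb : ∀ᶠ r in atTop, b r = 0)
    (hM : ∀ᶠ r in atTop, M ≤ V r - θ * log r) :
    ∃ A, IsRadialSupersolution n u (deriv u)
      (fun r => r ^ n * (u r * (V r - log (u r ^ 2)))) A := by
  obtain ⟨-, hC2, hODE, hpos, -, hgrowth⟩ := hu
  have hlog := eventually_one_le_sub_log_sq hM hgrowth hpos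
  obtain ⟨A, hA⟩ := (ha.and (hb.and (hlog.and (eventually_gt_atTop 0)))).exists_forall_of_atTop
  have hA₀ : 0 < A := (hA A le_rfl).2.2.2
  have hd : ∀ r, 0 < r → HasDerivAt u (deriv u r) r := fun r hr =>
    ((hC2.differentiableOn (by norm_num)).differentiableAt (Ioi_mem_nhds hr)).hasDerivAt
  have hd2 : ∀ r, 0 < r → HasDerivAt (deriv u) (deriv (deriv u) r) r := fun r hr =>
    (((hC2.deriv_of_isOpen isOpen_Ioi (m := 1) (by norm_num)).differentiableOn
      (by norm_num)).differentiableAt (Ioi_mem_nhds hr)).hasDerivAt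
  refine ⟨A, hA₀, fun r hr => hd r (hA₀.trans_le hr), fun r hr => ?_,
    fun r hr => hpos r (hA₀.trans_le hr), fun r hr => ?_⟩
  · obtain ⟨har, hbr, -, hr₀⟩ := hA r hr
    have hode := hODE r hr₀
    simp only [har, hbr, mul_zero, add_zero] at hode
    push_cast at hode
    have hpow : (n : ℝ) * r ^ (n - 1) = n * r ^ n / r := by
      rcases n with _ | k
      · simp
      · rw [Nat.add_sub_cancel, pow_succ, mul_div_assoc, mul_div_cancel_right₀ _ hr₀.ne']
    refine ((hasDerivAt_pow n r).mul (hd2 r hr₀)).congr_deriv ?_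
    linear_combination r ^ n * hode + deriv u r * hpow
  · obtain ⟨-, -, h1, hr₀⟩ := hA r hr
    calc r ^ n * u r = r ^ n * (u r * 1) := by ring
      _ ≤ _ := mul_le_mul_of_nonneg_left (mul_le_mul_of_nonneg_left h1 (hpos r hr₀).le)
          (by positivity)

theorem sol_P3_derivative_asymptotics_general (N : ℕ) (hN : 2 ≤ N) (V a b : ℝ → ℝ) (δ θ : ℝ)
    (hVab : CondVab a b) (hθ : MemTheta N V θ)
    (u : ℝ → ℝ)
    (hu : SolP3 N (fun r => V r + δ * a r) (fun r => 1 + δ * b r) θ u) :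
    (∃ R : ℝ, 0 < R ∧ ∀ r : ℝ, R ≤ r → deriv u r < 0) ∧
    Filter.Tendsto (fun r : ℝ => r ^ (N - 1) * deriv u r) Filter.atTop (nhds 0) ∧
    Filter.liminf (fun r : ℝ => r ^ (N - 1) * ((V r + δ * a r) * u r)) Filter.atTop = 0 := by
  obtain ⟨n, rfl⟩ : ∃ n, N = n + 1 := ⟨N - 1, by omega⟩
  obtain ⟨-, ha, -, hb, -⟩ := hVab
  obtain ⟨-, M, hM⟩ := hθ
  obtain ⟨A, hA⟩ := hu.isRadialSupersolution ha.eventually_atTop_eq_zero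
    hb.eventually_atTop_eq_zero hM
  obtain ⟨-, -, -, -, -, hgrowth⟩ := hu
  obtain ⟨m, hm⟩ := exists_eventually_le_pow_of_tendsto_rpow_neg_mul hgrowth
  have hneg : ∀ r, A ≤ r → r ^ n * deriv u r < 0 := fun r hr => hA.flux_neg hm hr
  simp only [Nat.add_sub_cancel]
  refine ⟨⟨A, hA.pos_radius, fun r hr => hA.deriv_neg_of_flux_neg hr (hneg r hr)⟩,
    hA.tendsto_flux_zero hneg, ?_⟩
  rw [liminf_congr <| ha.eventually_atTop_eq_zero.mono fun r har => by
    rw [har, mul_zero, add_zero]]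
  exact hA.liminf_pow_mul_mul_eq_zero hneg (eventually_neg_mul_le_of_le_sub_mul_log hM)

/-- Let `u` be a solution of problem (P3). Then there exists `R > 0` with
`u' < 0` on `[R,∞)`; moreover `r^{N-1}u'(r) → 0` as `r → ∞` and
`liminf_{r→∞} r^{N-1}V_δ(r)u(r) = 0`. -/
theorem sol_P3_derivative_asymptotics (N : ℕ) (hN : 2 ≤ N) (V a b : ℝ → ℝ) (δ θ : ℝ)
    (hV1 : CondV1 N V) (hVab : CondVab a b) (hδ : 0 ≤ δ) (hθ : MemTheta N V θ)
    (u : ℝ → ℝ)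
    (hu : SolP3 N (fun r => V r + δ * a r) (fun r => 1 + δ * b r) θ u) :
    (∃ R : ℝ, 0 < R ∧ ∀ r : ℝ, R ≤ r → deriv u r < 0) ∧
    Filter.Tendsto (fun r : ℝ => r ^ (N - 1) * deriv u r) Filter.atTop (nhds 0) ∧
    Filter.liminf (fun r : ℝ => r ^ (N - 1) * ((V r + δ * a r) * u r)) Filter.atTop = 0 :=
  sol_P3_derivative_asymptotics_general N hN V a b δ θ hVab hθ u hu
end
end

section
/- Assume (Vab), (V1), δ ≥ 0, and let ρ > 0. Suppose u₁, u₂ ∈ C([0,ρ)) ∩ C²((0,ρ)) are differentiable at 0 and satisfy uᵢ'' + ((N−1)/r)uᵢ' − V_δ(r)uᵢ + B_δ(r)·uᵢ·log uᵢ² = 0 on (0,ρ), uᵢ'(0) = 0, and uᵢ > 0 on (0,ρ) for i = 1,2. If u₁ < u₂ on [0,ρ), then (u₁/u₂)'(r) > 0 for all r ∈ (0,ρ). -/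
open Real Filter Set MeasureTheory

noncomputable section

open scoped Topology

/-!
Write `L u = u'' + (k/r) u'` with `k = N - 1` and `W = r^k (u₁' u₂ - u₁ u₂')`. Then
`W' = r^k (L u₁ · u₂ - u₁ · L u₂) = r^k B_δ u₁ u₂ (log u₂² - log u₁²) > 0`, so `W` is
strictly increasing, and `(u₁/u₂)' = W / (r^k u₂²)`. If `W` were `≤ 0` somewhere, it would
be `≤ m < 0` on some `(0, s]`; as `u₂` is bounded near `0` and `k ≥ 1`, this gives
`(u₁/u₂)' ≤ c/r` with `c < 0`, forcing `u₁/u₂ → +∞` at `0`, which is absurd since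
`0 < u₁/u₂ < 1`.
-/

def radialOp (k : ℕ) (u : ℝ → ℝ) (r : ℝ) : ℝ :=
  deriv (deriv u) r + k / r * deriv u r

def radialWronskian (k : ℕ) (u v : ℝ → ℝ) (r : ℝ) : ℝ :=
  r ^ k * (deriv u r * v r - u r * deriv v r)

lemma ContDiffOn.hasDerivAt_deriv_of_isOpen {u : ℝ → ℝ} {s : Set ℝ} {r : ℝ}
    (hu : ContDiffOn ℝ 2 u s) (hs : IsOpen s) (hr : r ∈ s) :
    HasDerivAt u (deriv u r) r ∧ HasDerivAt (deriv u) (deriv (deriv u) r) r :=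
  ⟨((hu.differentiableOn (by norm_num)).differentiableAt (hs.mem_nhds hr)).hasDerivAt,
    (((hu.deriv_of_isOpen hs (by norm_num : (1 : WithTop ℕ∞) + 1 ≤ 2)).differentiableOn
      one_ne_zero).differentiableAt (hs.mem_nhds hr)).hasDerivAt⟩

lemma hasDerivAt_radialWronskian {k : ℕ} {u v : ℝ → ℝ} {r : ℝ} (hr : r ≠ 0)
    (hu : HasDerivAt u (deriv u r) r) (hu' : HasDerivAt (deriv u) (deriv (deriv u) r) r)
    (hv : HasDerivAt v (deriv v r) r) (hv' : HasDerivAt (deriv v) (deriv (deriv v) r) r) :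
    HasDerivAt (radialWronskian k u v)
      (r ^ k * (radialOp k u r * v r - u r * radialOp k v r)) r := by
  refine ((hasDerivAt_pow k r).fun_mul ((hu'.fun_mul hv).fun_sub (hu.fun_mul hv'))).congr_deriv ?_
  rcases k with _ | k
  · simp [radialOp]
    ring
  · simp only [radialOp, pow_succ, Nat.add_sub_cancel]
    push_cast
    field_simp
    ring

lemma strictMonoOn_radialWronskian {k : ℕ} {u v : ℝ → ℝ} {ρ : ℝ}
    (hu : ContDiffOn ℝ 2 u (Ioo 0 ρ)) (hv : ContDiffOn ℝ 2 v (Ioo 0 ρ))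
    (h : ∀ r ∈ Ioo 0 ρ, u r * radialOp k v r < radialOp k u r * v r) :
    StrictMonoOn (radialWronskian k u v) (Ioo 0 ρ) := by
  have hW : ∀ r ∈ Ioo 0 ρ, HasDerivAt (radialWronskian k u v)
      (r ^ k * (radialOp k u r * v r - u r * radialOp k v r)) r := fun r hr =>
    hasDerivAt_radialWronskian hr.1.ne' (hu.hasDerivAt_deriv_of_isOpen isOpen_Ioo hr).1
      (hu.hasDerivAt_deriv_of_isOpen isOpen_Ioo hr).2
      (hv.hasDerivAt_deriv_of_isOpen isOpen_Ioo hr).1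
      (hv.hasDerivAt_deriv_of_isOpen isOpen_Ioo hr).2
  refine strictMonoOn_of_deriv_pos (convex_Ioo 0 ρ)
    (fun r hr => (hW r hr).continuousAt.continuousWithinAt) fun r hr => ?_
  rw [interior_Ioo] at hr
  rw [(hW r hr).deriv]
  exact mul_pos (pow_pos hr.1 k) (sub_pos.2 (h r hr))

lemma hasDerivAt_div_eq_radialWronskian {k : ℕ} {u v : ℝ → ℝ} {r : ℝ} (hr : r ≠ 0)
    (hu : HasDerivAt u (deriv u r) r) (hv : HasDerivAt v (deriv v r) r) (hv0 : v r ≠ 0) :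
    HasDerivAt (fun s => u s / v s) (radialWronskian k u v r / (r ^ k * v r ^ 2)) r := by
  refine (hu.fun_div hv hv0).congr_deriv ?_
  unfold radialWronskian
  field_simp

/-- `f - c log` is antitone near `0`, and `c log r → +∞` as `r → 0⁺`. -/
lemma tendsto_atTop_of_hasDerivAt_le_div {f f' : ℝ → ℝ} {c : ℝ} (hc : c < 0)
    (hf : ∀ᶠ r in 𝓝[>] 0, HasDerivAt f (f' r) r ∧ f' r ≤ c / r) :
    Tendsto f (𝓝[>] 0) atTop := by
  obtain ⟨ε, hε, hsub⟩ := mem_nhdsGT_iff_exists_Ioc_subset.1 hf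
  have hg : ∀ r ∈ Ioc 0 ε, HasDerivAt (fun s => f s - c * log s) (f' r - c * r⁻¹) r :=
    fun r hr => (hsub hr).1.sub ((hasDerivAt_log hr.1.ne').const_mul c)
  have hanti : AntitoneOn (fun s => f s - c * log s) (Ioc 0 ε) := by
    refine antitoneOn_of_deriv_nonpos (convex_Ioc 0 ε)
      (fun r hr => (hg r hr).continuousAt.continuousWithinAt)
      (fun r hr => (hg r (Ioc_subset_Ioc_right le_rfl (interior_subset hr))).differentiableAt
        |>.differentiableWithinAt) fun r hr => ?_
    have hr' : r ∈ Ioc 0 ε := interior_subset hr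
    rw [(hg r hr').deriv, sub_nonpos, ← div_eq_mul_inv]
    exact (hsub hr').2
  have hlog : Tendsto (fun s => c * log s) (𝓝[>] 0) atTop :=
    tendsto_log_nhdsGT_zero.const_mul_atBot_of_neg hc
  refine tendsto_atTop_mono' _ ?_ (tendsto_atTop_add_const_left _ (f ε - c * log ε) hlog)
  filter_upwards [Ioc_mem_nhdsGT hε] with s hs
  have := hanti hs ⟨hε, le_rfl⟩ hs.2
  linarith

lemma div_pow_mul_sq_le_div {k : ℕ} {W m r u M : ℝ} (hk : 1 ≤ k) (hm : m < 0) (hW : W ≤ m)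
    (hr : 0 < r) (hr1 : r ≤ 1) (hu : 0 < u) (huM : u ≤ M) :
    W / (r ^ k * u ^ 2) ≤ m / M ^ 2 / r := by
  have hM : 0 < M := hu.trans_le huM
  have hden : r ^ k * u ^ 2 ≤ r * M ^ 2 :=
    mul_le_mul (pow_le_of_le_one hr.le hr1 (by omega)) (pow_le_pow_left₀ hu.le huM 2)
      (by positivity) hr.le
  calc W / (r ^ k * u ^ 2) ≤ m / (r ^ k * u ^ 2) := by gcongr
    _ ≤ m / (r * M ^ 2) :=
      (div_le_div_iff₀ (by positivity) (by positivity)).2 (mul_le_mul_of_nonpos_left hden hm.le)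
    _ = m / M ^ 2 / r := by rw [div_div, mul_comm]

lemma radialWronskian_pos {k : ℕ} (hk : 1 ≤ k) {u v : ℝ → ℝ} {ρ : ℝ}
    (hu : DifferentiableOn ℝ u (Ioo 0 ρ)) (hv : DifferentiableOn ℝ v (Ioo 0 ρ))
    (hvpos : ∀ r ∈ Ioo 0 ρ, 0 < v r) (hv_bdd : IsBoundedUnder (· ≤ ·) (𝓝[>] 0) v)
    (hratio : IsBoundedUnder (· ≤ ·) (𝓝[>] 0) fun r => u r / v r)
    (hmono : StrictMonoOn (radialWronskian k u v) (Ioo 0 ρ)) :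
    ∀ r ∈ Ioo 0 ρ, 0 < radialWronskian k u v r := by
  intro r₀ hr₀
  by_contra! hle
  have hs : r₀ / 2 ∈ Ioo 0 ρ := ⟨by linarith [hr₀.1], by linarith [hr₀.1, hr₀.2]⟩
  set m := radialWronskian k u v (r₀ / 2)
  have hm : m < 0 := (hmono hs hr₀ (by linarith [hr₀.1])).trans_le hle
  obtain ⟨M, hM⟩ := hv_bdd
  have hnear : ∀ᶠ r in 𝓝[>] 0, r ∈ Ioo 0 (min (r₀ / 2) 1) ∧ v r ≤ M :=
    Eventually.and (Ioo_mem_nhdsGT (lt_min hs.1 one_pos)) hM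
  have hsub : ∀ {r}, r ∈ Ioo 0 (min (r₀ / 2) 1) → r ∈ Ioo 0 ρ := fun hr =>
    ⟨hr.1, hr.2.trans_le (min_le_left _ _) |>.trans hs.2⟩
  have hMpos : 0 < M := by
    obtain ⟨r, hr, hvr⟩ := hnear.exists
    exact (hvpos r (hsub hr)).trans_le hvr
  refine not_isBoundedUnder_of_tendsto_atTop (tendsto_atTop_of_hasDerivAt_le_div
    (f' := fun r => radialWronskian k u v r / (r ^ k * v r ^ 2)) (c := m / M ^ 2)
    (div_neg_of_neg_of_pos hm (by positivity))
    (hnear.mono fun r ⟨hr, hvr⟩ => ⟨?_, ?_⟩)) hratio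
  · have hr' := hsub hr
    exact hasDerivAt_div_eq_radialWronskian hr.1.ne'
      ((hu.differentiableAt (isOpen_Ioo.mem_nhds hr')).hasDerivAt)
      ((hv.differentiableAt (isOpen_Ioo.mem_nhds hr')).hasDerivAt) (hvpos r hr').ne'
  · exact div_pow_mul_sq_le_div hk hm
      (hmono (hsub hr) hs (hr.2.trans_le (min_le_left _ _))).le hr.1
      (hr.2.trans_le (min_le_right _ _)).le (hvpos r (hsub hr)) hvr

lemma mul_sub_mul_log_sq_lt {P B x y : ℝ} (hB : 0 < B) (hx : 0 < x) (hxy : x < y) :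
    x * (P * y - B * (y * log (y ^ 2))) < (P * x - B * (x * log (x ^ 2))) * y := by
  have hlog : log (x ^ 2) < log (y ^ 2) := log_lt_log (by positivity) (by gcongr)
  have := mul_pos (mul_pos (mul_pos hB hx) (hx.trans hxy)) (sub_pos.2 hlog)
  linarith

theorem ratio_monotone_general (N : ℕ) (hN : 2 ≤ N) (V a b : ℝ → ℝ) (δ ρ : ℝ)
    (hVab : CondVab a b) (hδ : 0 ≤ δ) (hρ : 0 < ρ)
    (u₁ u₂ : ℝ → ℝ)
    (hC₁ : ContDiffOn ℝ 2 u₁ (Set.Ioo 0 ρ))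
    (hode₁ : ∀ r : ℝ, 0 < r → r < ρ →
      deriv (deriv u₁) r + ((N : ℝ) - 1) / r * deriv u₁ r
        - (V r + δ * a r) * u₁ r + (1 + δ * b r) * (u₁ r * Real.log (u₁ r ^ 2)) = 0)
    (hpos₁ : ∀ r : ℝ, 0 < r → r < ρ → 0 < u₁ r)
    (hc₂ : ContinuousOn u₂ (Set.Ico 0 ρ)) (hC₂ : ContDiffOn ℝ 2 u₂ (Set.Ioo 0 ρ))
    (hode₂ : ∀ r : ℝ, 0 < r → r < ρ →
      deriv (deriv u₂) r + ((N : ℝ) - 1) / r * deriv u₂ r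
        - (V r + δ * a r) * u₂ r + (1 + δ * b r) * (u₂ r * Real.log (u₂ r ^ 2)) = 0)
    (hpos₂ : ∀ r : ℝ, 0 < r → r < ρ → 0 < u₂ r)
    (hlt : ∀ r : ℝ, 0 ≤ r → r < ρ → u₁ r < u₂ r) :
    ∀ r : ℝ, 0 < r → r < ρ → 0 < deriv (fun s => u₁ s / u₂ s) r := by
  obtain ⟨k, rfl⟩ : ∃ k, N = k + 1 := ⟨N - 1, by omega⟩
  have hcast : ((k + 1 : ℕ) : ℝ) - 1 = k := by push_cast; ring
  simp only [hcast] at hode₁ hode₂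
  have hmono : StrictMonoOn (radialWronskian k u₁ u₂) (Ioo 0 ρ) := by
    refine strictMonoOn_radialWronskian hC₁ hC₂ fun r ⟨hr0, hrρ⟩ => ?_
    obtain ⟨-, -, -, -, hb, -⟩ := hVab
    have hB : 0 < 1 + δ * b r := by nlinarith [hb r]
    have h₁ : radialOp k u₁ r =
        (V r + δ * a r) * u₁ r - (1 + δ * b r) * (u₁ r * log (u₁ r ^ 2)) := by
      rw [radialOp]; linarith [hode₁ r hr0 hrρ]
    have h₂ : radialOp k u₂ r =
        (V r + δ * a r) * u₂ r - (1 + δ * b r) * (u₂ r * log (u₂ r ^ 2)) := by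
      rw [radialOp]; linarith [hode₂ r hr0 hrρ]
    rw [h₁, h₂]
    exact mul_sub_mul_log_sq_lt hB (hpos₁ r hr0 hrρ) (hlt r hr0.le hrρ)
  have hu₂_bdd : IsBoundedUnder (· ≤ ·) (𝓝[>] 0) u₂ := by
    have := ((hc₂ 0 ⟨le_rfl, hρ⟩).mono Ioo_subset_Ico_self).tendsto
    rw [nhdsWithin_Ioo_eq_nhdsGT hρ] at this
    exact this.isBoundedUnder_le
  have hratio : IsBoundedUnder (· ≤ ·) (𝓝[>] 0) fun r => u₁ r / u₂ r :=
    isBoundedUnder_of_eventually_le (a := 1) <| by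
      filter_upwards [Ioo_mem_nhdsGT hρ] with r hr
      exact div_le_one_of_le₀ (hlt r hr.1.le hr.2).le (hpos₂ r hr.1 hr.2).le
  have hdiff₁ := hC₁.differentiableOn (by norm_num)
  have hdiff₂ := hC₂.differentiableOn (by norm_num)
  have hW := radialWronskian_pos (by omega) hdiff₁ hdiff₂ (fun r hr => hpos₂ r hr.1 hr.2)
    hu₂_bdd hratio hmono
  intro r hr0 hrρ
  have hr : r ∈ Ioo 0 ρ := ⟨hr0, hrρ⟩
  rw [(hasDerivAt_div_eq_radialWronskian (k := k) hr0.ne'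
    (hdiff₁.differentiableAt (isOpen_Ioo.mem_nhds hr)).hasDerivAt
    (hdiff₂.differentiableAt (isOpen_Ioo.mem_nhds hr)).hasDerivAt (hpos₂ r hr0 hrρ).ne').deriv]
  have := hW r hr
  have := hpos₂ r hr0 hrρ
  positivity

/-- Assume (Vab), (V1), `δ ≥ 0` and `ρ > 0`. If `u₁, u₂` solve the equation on
`(0,ρ)`, are positive there, continuous on `[0,ρ)` with `uᵢ'(0) = 0` and `u₁ < u₂` on
`[0,ρ)`, then `(u₁/u₂)' > 0` on `(0,ρ)`. -/
theorem ratio_monotone (N : ℕ) (hN : 2 ≤ N) (V a b : ℝ → ℝ) (δ ρ : ℝ)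
    (hV1 : CondV1 N V) (hVab : CondVab a b) (hδ : 0 ≤ δ) (hρ : 0 < ρ)
    (u₁ u₂ : ℝ → ℝ)
    (hc₁ : ContinuousOn u₁ (Set.Ico 0 ρ)) (hC₁ : ContDiffOn ℝ 2 u₁ (Set.Ioo 0 ρ))
    (hd₁ : HasDerivWithinAt u₁ 0 (Set.Ico 0 ρ) 0)
    (hode₁ : ∀ r : ℝ, 0 < r → r < ρ →
      deriv (deriv u₁) r + ((N : ℝ) - 1) / r * deriv u₁ r
        - (V r + δ * a r) * u₁ r + (1 + δ * b r) * (u₁ r * Real.log (u₁ r ^ 2)) = 0)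
    (hpos₁ : ∀ r : ℝ, 0 < r → r < ρ → 0 < u₁ r)
    (hc₂ : ContinuousOn u₂ (Set.Ico 0 ρ)) (hC₂ : ContDiffOn ℝ 2 u₂ (Set.Ioo 0 ρ))
    (hd₂ : HasDerivWithinAt u₂ 0 (Set.Ico 0 ρ) 0)
    (hode₂ : ∀ r : ℝ, 0 < r → r < ρ →
      deriv (deriv u₂) r + ((N : ℝ) - 1) / r * deriv u₂ r
        - (V r + δ * a r) * u₂ r + (1 + δ * b r) * (u₂ r * Real.log (u₂ r ^ 2)) = 0)
    (hpos₂ : ∀ r : ℝ, 0 < r → r < ρ → 0 < u₂ r)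
    (hlt : ∀ r : ℝ, 0 ≤ r → r < ρ → u₁ r < u₂ r) :
    ∀ r : ℝ, 0 < r → r < ρ → 0 < deriv (fun s => u₁ s / u₂ s) r :=
  ratio_monotone_general N hN V a b δ ρ hVab hδ hρ u₁ u₂ hC₁ hode₁ hpos₁ hc₂ hC₂ hode₂ hpos₂ hlt
end
end

section
/- Let N ≥ 2, α > 1−N and σ > 0 satisfy N − 1 + ασ/2 ≥ 0 (which holds under the condition −σα < 2·min{1, N−1+α}). Then for every continuously differentiable function u : (0,∞) → ℝ with compact support and every r > 0, one has r^{N−1+ασ/2}·u(r)² ≤ ∫_r^∞ s^{N−1}(u'(s)² + s^{ασ}u(s)²) ds. In particular, |u(r)| ≤ r^{(1−N)/2 − ασ/4}·(∫_0^∞ s^{N−1}(u'(s)² + s^{ασ}u(s)²) ds)^{1/2} for all r > 0. -/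
open Real Filter Set MeasureTheory

/-!
With `β = N - 1 + ασ/2 ≥ 0`, the fundamental theorem of calculus on `(r, ∞)` gives
`r^β u(r)² = -∫_r^∞ (β s^(β-1) u² + 2 s^β u u') ds`, since `u` vanishes near infinity.
The first term of the integrand is nonnegative because `β ≥ 0`, and writing
`s^β = s^((N-1)/2) · s^((N-1+ασ)/2)` the cross term is bounded by AM-GM:
`-2 s^β u u' ≤ s^(N-1) u'² + s^(N-1+ασ) u²`. The pointwise bound on `u` follows by enlarging
`(r, ∞)` to `(0, ∞)` and dividing by `r^β`.
-/

theorem ContinuousOn.integrable_mul_of_tsupport_subset {X : Type*} [TopologicalSpace X]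
    [MeasurableSpace X] [OpensMeasurableSpace X] {μ : Measure X} [IsFiniteMeasureOnCompacts μ]
    {U : Set X} {g h : X → ℝ} (hg : ContinuousOn g U) (hU : IsOpen U) (hh : Continuous h)
    (hhc : HasCompactSupport h) (hhU : tsupport h ⊆ U) :
    Integrable (fun x => g x * h x) μ :=
  ((hg.mul hh.continuousOn).continuous_of_tsupport_subset hU
    (tsupport_mul_subset_right.trans hhU)).integrable_of_hasCompactSupport hhc.mul_left

theorem integrable_rpow_mul_mul_of_tsupport_subset_Ioi {v w : ℝ → ℝ} (c : ℝ)
    (hv : Continuous v) (hw : Continuous w) (hwc : HasCompactSupport w) (hw' : tsupport w ⊆ Ioi 0) :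
    Integrable fun s => s ^ c * (v s * w s) := by
  have hg : ContinuousOn (fun s => s ^ c * v s) (Ioi 0) :=
    (continuousOn_id.rpow_const fun s hs => Or.inl (ne_of_gt hs)).mul hv.continuousOn
  simpa only [mul_assoc] using
    hg.integrable_mul_of_tsupport_subset (μ := volume) isOpen_Ioi hw hwc hw'

theorem neg_two_mul_rpow_mul_le {s a b β : ℝ} (hs : 0 < s) (hab : a + b = 2 * β) (x y : ℝ) :
    -(2 * (s ^ β * (x * y))) ≤ s ^ a * y ^ 2 + s ^ b * x ^ 2 := by
  have hβ : s ^ β = s ^ (a / 2) * s ^ (b / 2) := by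
    rw [← rpow_add hs]
    congr 1
    linarith
  have hsq : ∀ c : ℝ, s ^ c = (s ^ (c / 2)) ^ 2 := fun c => by
    rw [← rpow_natCast, ← rpow_mul hs.le]
    norm_num
  rw [hβ, hsq a, hsq b]
  nlinarith [sq_nonneg (s ^ (a / 2) * y + s ^ (b / 2) * x)]

theorem abs_le_rpow_mul_sqrt_of_rpow_mul_sq_le {r β x I : ℝ} (hr : 0 < r)
    (h : r ^ β * x ^ 2 ≤ I) : |x| ≤ r ^ (-β / 2) * √I := by
  have hsqrt : r ^ (-β / 2) = √(r ^ (-β)) := by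
    rw [sqrt_eq_rpow, ← rpow_mul hr.le]
    ring_nf
  rw [hsqrt, ← sqrt_mul (rpow_nonneg hr.le _)]
  refine abs_le_sqrt ?_
  rwa [rpow_neg hr.le, le_inv_mul_iff₀ (rpow_pos_of_pos hr β)]

section

variable {u : ℝ → ℝ}

theorem ContDiffOn.continuous_deriv_of_tsupport_subset_Ioi (hu : ContDiffOn ℝ 1 u (Ioi 0))
    (hsupp' : tsupport u ⊆ Ioi 0) : Continuous (deriv u) :=
  (hu.continuousOn_deriv_of_isOpen isOpen_Ioi le_rfl).continuous_of_tsupport_subset isOpen_Ioi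
    (tsupport_deriv_subset.trans hsupp')

theorem ContDiffOn.hasDerivAt_rpow_mul_sq (hu : ContDiffOn ℝ 1 u (Ioi 0)) {s : ℝ}
    (hs : 0 < s) (β : ℝ) :
    HasDerivAt (fun x => x ^ β * u x ^ 2)
      (β * (s ^ (β - 1) * (u s * u s)) + 2 * (s ^ β * (u s * deriv u s))) s := by
  have hu' : HasDerivAt u (deriv u s) s :=
    ((hu.differentiableOn one_ne_zero).differentiableAt (Ioi_mem_nhds hs)).hasDerivAt
  refine ((hasDerivAt_rpow_const (p := β) (Or.inl hs.ne')).mul (hu'.fun_pow 2)).congr_deriv ?_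
  norm_num
  ring

theorem integrable_rpow_mul_deriv_sq_add_rpow_mul_sq (hu : ContDiffOn ℝ 1 u (Ioi 0))
    (hsupp : HasCompactSupport u) (hsupp' : tsupport u ⊆ Ioi 0) (a b : ℝ) :
    Integrable fun s => s ^ a * deriv u s ^ 2 + s ^ b * u s ^ 2 := by
  have hcu : Continuous u := hu.continuousOn.continuous_of_tsupport_subset isOpen_Ioi hsupp'
  have hcd := hu.continuous_deriv_of_tsupport_subset_Ioi hsupp'
  simp only [sq]
  exact (integrable_rpow_mul_mul_of_tsupport_subset_Ioi _ hcd hcd hsupp.deriv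
      (tsupport_deriv_subset.trans hsupp')).add
    (integrable_rpow_mul_mul_of_tsupport_subset_Ioi _ hcu hcu hsupp hsupp')

theorem rpow_mul_sq_le_setIntegral_Ioi (hu : ContDiffOn ℝ 1 u (Ioi 0))
    (hsupp : HasCompactSupport u) (hsupp' : tsupport u ⊆ Ioi 0) {a b β r : ℝ}
    (hab : a + b = 2 * β) (hβ : 0 ≤ β) (hr : 0 < r) :
    r ^ β * u r ^ 2 ≤ ∫ s in Ioi r, (s ^ a * deriv u s ^ 2 + s ^ b * u s ^ 2) := by
  have hcu : Continuous u := hu.continuousOn.continuous_of_tsupport_subset isOpen_Ioi hsupp'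
  have hcd := hu.continuous_deriv_of_tsupport_subset_Ioi hsupp'
  have hderiv_int : Integrable fun s =>
      β * (s ^ (β - 1) * (u s * u s)) + 2 * (s ^ β * (u s * deriv u s)) :=
    ((integrable_rpow_mul_mul_of_tsupport_subset_Ioi _ hcu hcu hsupp hsupp').const_mul β).add
      ((integrable_rpow_mul_mul_of_tsupport_subset_Ioi _ hcu hcd hsupp.deriv
        (tsupport_deriv_subset.trans hsupp')).const_mul 2)
  have hlim : Tendsto (fun s => s ^ β * u s ^ 2) atTop (nhds 0) :=
    (hsupp.comp_left (g := fun x : ℝ => x ^ 2) (zero_pow two_ne_zero)).mul_left.is_zero_at_infty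
      |>.mono_left atTop_le_cocompact
  have hFTC := integral_Ioi_of_hasDerivAt_of_tendsto'
    (fun s hs => hu.hasDerivAt_rpow_mul_sq (hr.trans_le hs) β) hderiv_int.integrableOn hlim
  calc r ^ β * u r ^ 2
      = ∫ s in Ioi r,
          -(β * (s ^ (β - 1) * (u s * u s)) + 2 * (s ^ β * (u s * deriv u s))) := by
        rw [integral_neg, hFTC, zero_sub, neg_neg]
    _ ≤ _ := by
      refine setIntegral_mono_on hderiv_int.neg.integrableOn
        (integrable_rpow_mul_deriv_sq_add_rpow_mul_sq hu hsupp hsupp' a b).integrableOn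
        measurableSet_Ioi fun s hs => ?_
      have hs : 0 < s := hr.trans hs
      have hβ_term : 0 ≤ β * (s ^ (β - 1) * (u s * u s)) :=
        mul_nonneg hβ (mul_nonneg (rpow_nonneg hs.le _) (mul_self_nonneg _))
      linarith [neg_two_mul_rpow_mul_le hs hab (u s) (deriv u s)]

theorem abs_le_rpow_mul_sqrt_setIntegral_Ioi_zero (hu : ContDiffOn ℝ 1 u (Ioi 0))
    (hsupp : HasCompactSupport u) (hsupp' : tsupport u ⊆ Ioi 0) {a b β r : ℝ}
    (hab : a + b = 2 * β) (hβ : 0 ≤ β) (hr : 0 < r) :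
    |u r| ≤ r ^ (-β / 2) * √(∫ s in Ioi 0, (s ^ a * deriv u s ^ 2 + s ^ b * u s ^ 2)) := by
  refine abs_le_rpow_mul_sqrt_of_rpow_mul_sq_le hr
    ((rpow_mul_sq_le_setIntegral_Ioi hu hsupp hsupp' hab hβ hr).trans ?_)
  refine setIntegral_mono_set
    (integrable_rpow_mul_deriv_sq_add_rpow_mul_sq hu hsupp hsupp' a b).integrableOn ?_
    (Ioi_subset_Ioi hr.le).eventuallyLE
  filter_upwards [ae_restrict_mem measurableSet_Ioi] with s (hs : 0 < s)
  exact add_nonneg (mul_nonneg (rpow_nonneg hs.le _) (sq_nonneg _))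
    (mul_nonneg (rpow_nonneg hs.le _) (sq_nonneg _))

end

theorem radial_lemma_weighted_general (N : ℕ) (hN : 2 ≤ N) (α σ : ℝ)
    (hexp : 0 ≤ (N : ℝ) - 1 + α * σ / 2)
    (u : ℝ → ℝ)
    (hu : ContDiffOn ℝ 1 u (Set.Ioi 0))
    (hsupp : HasCompactSupport u) (hsupp' : tsupport u ⊆ Set.Ioi 0) :
    ∀ r : ℝ, 0 < r →
      r ^ ((N : ℝ) - 1 + α * σ / 2) * u r ^ 2 ≤
        (∫ s in Set.Ioi r, s ^ (N - 1) * (deriv u s ^ 2 + s ^ (α * σ) * u s ^ 2)) ∧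
      |u r| ≤ r ^ ((1 - (N : ℝ)) / 2 - α * σ / 4) *
        Real.sqrt (∫ s in Set.Ioi (0 : ℝ),
          s ^ (N - 1) * (deriv u s ^ 2 + s ^ (α * σ) * u s ^ 2)) := by
  intro r hr
  have hweight : ∀ s ∈ Ioi (0 : ℝ),
      s ^ (N - 1) * (deriv u s ^ 2 + s ^ (α * σ) * u s ^ 2) =
        s ^ ((N : ℝ) - 1) * deriv u s ^ 2 + s ^ ((N : ℝ) - 1 + α * σ) * u s ^ 2 := fun s hs => by
    rw [rpow_add hs, ← rpow_natCast, Nat.cast_sub (by omega), Nat.cast_one]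
    ring
  have hab : ((N : ℝ) - 1) + ((N : ℝ) - 1 + α * σ) = 2 * ((N : ℝ) - 1 + α * σ / 2) := by ring
  rw [setIntegral_congr_fun measurableSet_Ioi hweight,
    setIntegral_congr_fun measurableSet_Ioi fun s hs => hweight s (hr.trans hs)]
  refine ⟨rpow_mul_sq_le_setIntegral_Ioi hu hsupp hsupp' hab hexp hr, ?_⟩
  convert abs_le_rpow_mul_sqrt_setIntegral_Ioi_zero hu hsupp hsupp' hab hexp hr using 3
  ring

/-- a generalized radial lemma of Strauss type. Let `N ≥ 2`, `α > 1-N`,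
`σ > 0` with `N - 1 + ασ/2 ≥ 0`. For every `C¹` function `u` on `(0,∞)` with compact
support in `(0,∞)` and every `r > 0`,
`r^{N-1+ασ/2} u(r)² ≤ ∫_r^∞ s^{N-1}(u'(s)² + s^{ασ}u(s)²) ds`, and in particular
`|u(r)| ≤ r^{(1-N)/2 - ασ/4} (∫_0^∞ s^{N-1}(u'(s)² + s^{ασ}u(s)²) ds)^{1/2}`. -/
theorem radial_lemma_weighted (N : ℕ) (hN : 2 ≤ N) (α σ : ℝ)
    (hα : 1 - (N : ℝ) < α) (hσ : 0 < σ) (hexp : 0 ≤ (N : ℝ) - 1 + α * σ / 2)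
    (u : ℝ → ℝ)
    (hu : ContDiffOn ℝ 1 u (Set.Ioi 0))
    (hsupp : HasCompactSupport u) (hsupp' : tsupport u ⊆ Set.Ioi 0) :
    ∀ r : ℝ, 0 < r →
      r ^ ((N : ℝ) - 1 + α * σ / 2) * u r ^ 2 ≤
        (∫ s in Set.Ioi r, s ^ (N - 1) * (deriv u s ^ 2 + s ^ (α * σ) * u s ^ 2)) ∧
      |u r| ≤ r ^ ((1 - (N : ℝ)) / 2 - α * σ / 4) *
        Real.sqrt (∫ s in Set.Ioi (0 : ℝ),
          s ^ (N - 1) * (deriv u s ^ 2 + s ^ (α * σ) * u s ^ 2)) :=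
  radial_lemma_weighted_general N hN α σ hexp u hu hsupp hsupp'
end

section
/- Let N ≥ 2, α > 1−N and σ ∈ (0, 2/(N−2)⁺) satisfy −σα < 2·min{1, N−1+α}. Suppose u ∈ C([0,∞)) ∩ C²((0,∞)) is nonnegative, satisfies u'' + ((N−1)/r)u' − r^{ασ}u + u^{2σ+1} = 0 on (0,∞), and limsup_{r→∞} r^{(N−1)/2 + ασ/4}·u(r) < ∞. Then there exist constants C > 0 and c > 0 such that u(r) ≤ C·exp(−c·r^{(ασ+2)/2}) for all r ≥ 0. -/
/-!
Put `a = ασ` and `γ = (N-1)/2 + a/4`. The growth hypothesis says `u = O(r^{-γ})`, and the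
condition on `σα` makes `a + 2σγ > 0`, so eventually `u^{2σ} ≤ r^a/2`: beyond some `R`, `u` is
a subsolution of `w'' + ((N-1)/r) w' = (r^a/2) w`. The profile `φ(r) = exp(-r^{(a+2)/2}/(a+2))`
has logarithmic derivative `-r^{a/2}/2`, which makes it a supersolution of the same equation
once `a + 2(N-1) ≥ 0`. Both `u` and `φ` vanish at infinity, so a positive maximum of `u - Cφ`
on `[R, ∞)` would be interior, with zero first and positive second derivative, which is
impossible. Hence `u ≤ Cφ` on `[R, ∞)`, and on `[0, R]` this follows from compactness and `φ`
decreasing.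
-/

open Real Filter Set Topology

theorem nonpos_of_tendsto_zero_of_deriv_deriv_pos {v : ℝ → ℝ} {R : ℝ}
    (hcont : ContinuousOn v (Ici R)) (hlim : Tendsto v atTop (𝓝 0)) (hR : v R ≤ 0)
    (hconvex : ∀ r > R, 0 < v r → deriv v r = 0 → 0 < deriv (deriv v) r) :
    ∀ r ≥ R, v r ≤ 0 := by
  by_contra! ⟨r₁, hr₁R, hr₁⟩
  obtain ⟨b, hb, hr₁b⟩ :=
    ((hlim.eventually (gt_mem_nhds hr₁)).and (eventually_ge_atTop r₁)).exists
  obtain ⟨r₀, ⟨hRr₀, hr₀b⟩, hmax⟩ := isCompact_Icc.exists_isMaxOn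
    (nonempty_Icc.2 (hr₁R.trans hr₁b)) (hcont.mono Icc_subset_Ici_self)
  have hr₁r₀ : v r₁ ≤ v r₀ := isMaxOn_iff.1 hmax r₁ ⟨hr₁R, hr₁b⟩
  have hRr₀ : R < r₀ := hRr₀.lt_of_ne (by rintro rfl; linarith)
  have hr₀b : r₀ < b := hr₀b.lt_of_ne (by rintro rfl; linarith)
  have hlocmax : IsLocalMax v r₀ := hmax.isLocalMax (Icc_mem_nhds hRr₀ hr₀b)
  have hd : deriv v r₀ = 0 := hlocmax.deriv_eq_zero
  have hd2 : 0 < deriv (deriv v) r₀ := hconvex r₀ hRr₀ (hr₁.trans_le hr₁r₀) hd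
  have hlocmin : IsLocalMin v r₀ :=
    isLocalMin_of_deriv_deriv_pos hd2 hd (hcont.continuousAt (Ici_mem_nhds hRr₀))
  have hconst : v =ᶠ[𝓝 r₀] fun _ => v r₀ :=
    (hlocmin.and hlocmax).mono fun x h => le_antisymm h.2 h.1
  have hd2_zero : deriv (deriv v) r₀ = 0 := by
    rw [hconst.deriv.deriv_eq]
    simp
  linarith

theorem le_of_subsolution_of_supersolution {u φ b q : ℝ → ℝ} {R : ℝ}
    (hu : ContDiffOn ℝ 2 u (Ioi R)) (hφ : ContDiffOn ℝ 2 φ (Ioi R))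
    (huc : ContinuousOn u (Ici R)) (hφc : ContinuousOn φ (Ici R))
    (hq : ∀ r > R, 0 < q r)
    (hsub : ∀ r > R, q r * u r ≤ deriv (deriv u) r + b r * deriv u r)
    (hsuper : ∀ r > R, deriv (deriv φ) r + b r * deriv φ r ≤ q r * φ r)
    (hR : u R ≤ φ R) (hlim : Tendsto (fun r => u r - φ r) atTop (𝓝 0)) :
    ∀ r ≥ R, u r ≤ φ r := by
  have hdiff : ∀ f : ℝ → ℝ, ContDiffOn ℝ 2 f (Ioi R) → ∀ r > R,
      DifferentiableAt ℝ f r ∧ DifferentiableAt ℝ (deriv f) r := fun f hf r hr =>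
    have hf' : ContDiffOn ℝ 1 (deriv f) (Ioi R) := hf.deriv_of_isOpen isOpen_Ioi (by norm_num)
    ⟨(hf.differentiableOn (by norm_num)).differentiableAt (Ioi_mem_nhds hr),
      (hf'.differentiableOn one_ne_zero).differentiableAt (Ioi_mem_nhds hr)⟩
  have hderiv : ∀ r > R,
      deriv (fun x => u x - φ x) =ᶠ[𝓝 r] fun x => deriv u x - deriv φ x := fun r hr =>
    (eventually_gt_nhds hr).mono fun x hx => deriv_sub (hdiff u hu x hx).1 (hdiff φ hφ x hx).1
  intro r hr
  suffices h : u r - φ r ≤ 0 by linarith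
  refine nonpos_of_tendsto_zero_of_deriv_deriv_pos (v := fun x => u x - φ x) (huc.sub hφc)
    hlim (by linarith) (fun r hr hpos hd => ?_) r hr
  rw [(hderiv r hr).eq_of_nhds] at hd
  rw [(hderiv r hr).deriv_eq, deriv_fun_sub (hdiff u hu r hr).2 (hdiff φ hφ r hr).2]
  have hgap : 0 < q r * (u r - φ r) := mul_pos (hq r hr) hpos
  have hsub' := hsub r hr
  rw [show deriv u r = deriv φ r by linarith] at hsub'
  linarith [hsuper r hr, mul_sub (q r) (u r) (φ r)]

noncomputable def decayProfile (a r : ℝ) : ℝ := exp (-(a + 2)⁻¹ * r ^ ((a + 2) / 2))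

section decayProfile

variable {a r : ℝ}

theorem decayProfile_pos : 0 < decayProfile a r := exp_pos _

theorem hasDerivAt_decayProfile (ha : a + 2 ≠ 0) (hr : 0 < r) :
    HasDerivAt (decayProfile a) (-(r ^ (a / 2) * decayProfile a r) / 2) r := by
  refine (((hasDerivAt_rpow_const (p := (a + 2) / 2) (Or.inl hr.ne')).const_mul
    (-(a + 2)⁻¹)).exp).congr_deriv ?_
  rw [show (a + 2) / 2 - 1 = a / 2 by ring, decayProfile]
  field_simp

theorem hasDerivAt_deriv_decayProfile (ha : a + 2 ≠ 0) (hr : 0 < r) :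
    HasDerivAt (deriv (decayProfile a))
      ((r ^ a / 4 - a / 4 * r ^ (a / 2 - 1)) * decayProfile a r) r := by
  have heq : deriv (decayProfile a) =ᶠ[𝓝 r] fun x => -(x ^ (a / 2) * decayProfile a x) / 2 :=
    (eventually_gt_nhds hr).mono fun x hx => (hasDerivAt_decayProfile ha hx).deriv
  refine HasDerivAt.congr_of_eventuallyEq ?_ heq
  refine ((((hasDerivAt_rpow_const (p := a / 2) (Or.inl hr.ne')).mul
    (hasDerivAt_decayProfile ha hr)).neg.div_const 2)).congr_deriv ?_
  rw [show r ^ a = r ^ (a / 2) * r ^ (a / 2) by rw [← rpow_add hr]; ring_nf]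
  ring

theorem decayProfile_supersolution {k : ℝ} (ha : a + 2 ≠ 0) (hk : 0 ≤ a + 2 * k)
    (hr : 0 < r) :
    deriv (deriv (decayProfile a)) r + k / r * deriv (decayProfile a) r
      ≤ r ^ a / 4 * decayProfile a r := by
  rw [(hasDerivAt_deriv_decayProfile ha hr).deriv, (hasDerivAt_decayProfile ha hr).deriv,
    rpow_sub hr, rpow_one]
  have hφ := decayProfile_pos (a := a) (r := r)
  have hgap : 0 ≤ (a + 2 * k) * (r ^ (a / 2) / r * decayProfile a r) := by positivity
  linarith [show k / r * (-(r ^ (a / 2) * decayProfile a r) / 2)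
    = -(k * (r ^ (a / 2) / r * decayProfile a r)) / 2 by ring]

theorem decayProfile_le_of_le {s : ℝ} (ha : 0 < a + 2) (hr : 0 ≤ r) (hrs : r ≤ s) :
    decayProfile a s ≤ decayProfile a r := by
  refine exp_le_exp.2 ?_
  rw [neg_mul, neg_mul, neg_le_neg_iff]
  exact mul_le_mul_of_nonneg_left (rpow_le_rpow hr hrs (by linarith)) (inv_nonneg.2 ha.le)

theorem tendsto_decayProfile_atTop (ha : 0 < a + 2) : Tendsto (decayProfile a) atTop (𝓝 0) :=
  tendsto_exp_atBot.comp <| (tendsto_rpow_atTop (by linarith)).const_mul_atTop_of_neg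
    (by simpa using ha)

theorem contDiffOn_decayProfile {n : WithTop ℕ∞} : ContDiffOn ℝ n (decayProfile a) (Ioi 0) :=
  fun _ hx => (contDiffAt_const.mul (contDiffAt_rpow_const_of_ne hx.ne')).exp.contDiffWithinAt

end decayProfile

section Decay

variable {u : ℝ → ℝ} {γ M : ℝ}

theorem tendsto_zero_of_rpow_mul_le (hγ : 0 < γ) (hnn : ∀ᶠ r in atTop, 0 ≤ u r)
    (hbd : ∀ᶠ r in atTop, r ^ γ * u r ≤ M) : Tendsto u atTop (𝓝 0) := by
  refine tendsto_of_tendsto_of_tendsto_of_le_of_le' tendsto_const_nhds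
    (by simpa using (tendsto_rpow_neg_atTop hγ).const_mul M) hnn ?_
  filter_upwards [hbd, eventually_gt_atTop 0] with r hbd hr
  rw [rpow_neg hr.le, ← div_eq_mul_inv, le_div_iff₀ (rpow_pos_of_pos hr γ), mul_comm]
  exact hbd

theorem eventually_rpow_le_mul_rpow_of_rpow_mul_le {p a δ : ℝ} (hp : 0 ≤ p) (hδ : 0 < δ)
    (hpγ : 0 < a + p * γ) (hnn : ∀ᶠ r in atTop, 0 ≤ u r)
    (hbd : ∀ᶠ r in atTop, r ^ γ * u r ≤ M) : ∀ᶠ r in atTop, u r ^ p ≤ δ * r ^ a := by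
  filter_upwards [hnn, hbd, eventually_gt_atTop 0,
    (tendsto_rpow_atTop hpγ).eventually_ge_atTop (M ^ p / δ)] with r hu hbd hr hlarge
  have hpow : r ^ (p * γ) * u r ^ p ≤ M ^ p := by
    rw [mul_comm p, rpow_mul hr.le, ← mul_rpow (by positivity) hu]
    exact rpow_le_rpow (by positivity) hbd hp
  have hsplit : r ^ (a + p * γ) = r ^ a * r ^ (p * γ) := rpow_add hr _ _
  rw [div_le_iff₀ hδ, hsplit] at hlarge
  have hrpow := rpow_pos_of_pos hr (p * γ)
  nlinarith

end Decay

theorem le_mul_decayProfile_of_radial_eq {u : ℝ → ℝ} {a k p R C : ℝ} (ha : 0 < a + 2)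
    (hk : 0 ≤ a + 2 * k) (hp : 0 ≤ p) (hR : 0 < R) (hC : 0 < C)
    (hu : ContDiffOn ℝ 2 u (Ioi R)) (huc : ContinuousOn u (Ici R))
    (hnn : ∀ r ≥ R, 0 ≤ u r) (hlim : Tendsto u atTop (𝓝 0))
    (hode : ∀ r > R, deriv (deriv u) r + k / r * deriv u r - r ^ a * u r + u r ^ (p + 1) = 0)
    (hsmall : ∀ r ≥ R, u r ^ p ≤ 2⁻¹ * r ^ a) (huR : u R ≤ C * decayProfile a R) :
    ∀ r ≥ R, u r ≤ C * decayProfile a r := by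
  have hφ : ContDiffOn ℝ 2 (fun r => C * decayProfile a r) (Ioi 0) :=
    contDiffOn_const.mul contDiffOn_decayProfile
  refine le_of_subsolution_of_supersolution (q := fun r => 2⁻¹ * r ^ a) (b := fun r => k / r) hu
    (hφ.mono (Ioi_subset_Ioi hR.le)) huc (hφ.continuousOn.mono fun r hr => hR.trans_le hr)
    (fun r hr => mul_pos (by norm_num) (rpow_pos_of_pos (hR.trans hr) a)) (fun r hr => ?_)
    (fun r hr => ?_) huR (by simpa using hlim.sub ((tendsto_decayProfile_atTop ha).const_mul C))
  · have hur := hnn r hr.le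
    have hpow : u r ^ (p + 1) = u r ^ p * u r := by
      rw [rpow_add' hur (by linarith), rpow_one]
    have hsmall' := mul_le_mul_of_nonneg_right (hsmall r hr.le) hur
    linarith [hode r hr]
  · have hr0 := hR.trans hr
    simp only [deriv_const_mul_field']
    have hsuper := mul_le_mul_of_nonneg_left (decayProfile_supersolution ha.ne' hk hr0) hC.le
    have hφ := mul_pos hC (decayProfile_pos (a := a) (r := r))
    have hrpow := rpow_pos_of_pos hr0 a
    nlinarith

theorem exists_pos_le_mul_decayProfile_of_radial_eq {u : ℝ → ℝ} {a k p R : ℝ}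
    (ha : 0 < a + 2) (hk : 0 ≤ a + 2 * k) (hp : 0 ≤ p) (hR : 0 < R)
    (hu : ContDiffOn ℝ 2 u (Ioi 0)) (huc : ContinuousOn u (Ici 0))
    (hnn : ∀ r, 0 ≤ r → 0 ≤ u r) (hlim : Tendsto u atTop (𝓝 0))
    (hode : ∀ r, 0 < r →
      deriv (deriv u) r + k / r * deriv u r - r ^ a * u r + u r ^ (p + 1) = 0)
    (hsmall : ∀ r ≥ R, u r ^ p ≤ 2⁻¹ * r ^ a) :
    ∃ C, 0 < C ∧ ∀ r, 0 ≤ r → u r ≤ C * decayProfile a r := by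
  obtain ⟨x₀, hx₀, hmax⟩ := isCompact_Icc.exists_isMaxOn (nonempty_Icc.2 hR.le)
    (huc.mono Icc_subset_Ici_self)
  have hnear : ∀ r ∈ Icc 0 R, u r ≤ u x₀ := isMaxOn_iff.1 hmax
  set C := (u x₀ + 1) / decayProfile a R
  have hC : 0 < C := div_pos (by linarith [hnn x₀ hx₀.1]) decayProfile_pos
  have hCR : u x₀ ≤ C * decayProfile a R := by
    rw [div_mul_cancel₀ _ decayProfile_pos.ne']
    linarith
  have hfar := le_mul_decayProfile_of_radial_eq ha hk hp hR hC
    (hu.mono (Ioi_subset_Ioi hR.le)) (huc.mono (Ici_subset_Ici.2 hR.le))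
    (fun r hr => hnn r (hR.le.trans hr)) hlim (fun r hr => hode r (hR.trans hr)) hsmall
    ((hnear R ⟨hR.le, le_rfl⟩).trans hCR)
  refine ⟨C, hC, fun r hr => ?_⟩
  rcases le_total r R with hrR | hRr
  · exact (hnear r ⟨hr, hrR⟩).trans <| hCR.trans <|
      mul_le_mul_of_nonneg_left (decayProfile_le_of_le ha hr hrR) hC.le
  · exact hfar r hRr

theorem power_equation_decay_general (N : ℕ) (hN : 2 ≤ N) (α σ : ℝ)
    (hσ : 0 < σ)
    (hcond : -(σ * α) < 2 * min 1 ((N : ℝ) - 1 + α))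
    (u : ℝ → ℝ)
    (huc : ContinuousOn u (Set.Ici 0)) (huC2 : ContDiffOn ℝ 2 u (Set.Ioi 0))
    (hnonneg : ∀ r : ℝ, 0 ≤ r → 0 ≤ u r)
    (hode : ∀ r : ℝ, 0 < r →
      deriv (deriv u) r + ((N : ℝ) - 1) / r * deriv u r
        - r ^ (α * σ) * u r + u r ^ (2 * σ + 1) = 0)
    (hbd : ∃ M : ℝ, ∀ᶠ r : ℝ in Filter.atTop,
      r ^ (((N : ℝ) - 1) / 2 + α * σ / 4) * u r ≤ M) :
    ∃ C : ℝ, 0 < C ∧ ∃ c : ℝ, 0 < c ∧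
      ∀ r : ℝ, 0 ≤ r → u r ≤ C * Real.exp (-c * r ^ ((α * σ + 2) / 2)) := by
  obtain ⟨M, hM⟩ := hbd
  have hN' : (2 : ℝ) ≤ N := by exact_mod_cast hN
  have ha : 0 < α * σ + 2 := by linarith [min_le_left 1 ((N : ℝ) - 1 + α)]
  have hγ : 0 < ((N : ℝ) - 1) / 2 + α * σ / 4 := by linarith
  have hpγ : 0 < α * σ + 2 * σ * (((N : ℝ) - 1) / 2 + α * σ / 4) := by
    have hfactor : 0 < σ * ((N : ℝ) - 1 + α + α * σ / 2) :=
      mul_pos hσ (by linarith [min_le_right 1 ((N : ℝ) - 1 + α)])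
    linarith
  have hnn : ∀ᶠ r in atTop, 0 ≤ u r := (eventually_ge_atTop 0).mono hnonneg
  obtain ⟨R, hR⟩ := eventually_atTop.1 <| (eventually_gt_atTop 0).and <|
    eventually_rpow_le_mul_rpow_of_rpow_mul_le (δ := 2⁻¹) (by positivity) (by norm_num) hpγ
      hnn hM
  obtain ⟨C, hC, hle⟩ := exists_pos_le_mul_decayProfile_of_radial_eq ha (by linarith)
    (by positivity) (hR R le_rfl).1 huC2 huc hnonneg (tendsto_zero_of_rpow_mul_le hγ hnn hM)
    hode fun r hr => (hR r hr).2
  exact ⟨C, hC, (α * σ + 2)⁻¹, inv_pos.2 ha, hle⟩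

/-- Let `N ≥ 2`, `α > 1-N`, `σ ∈ (0, 2/(N-2)⁺)` (expressed as
`σ(N-2) < 2`, which is no restriction if `N = 2`) with `-σα < 2 min{1, N-1+α}`.
If `u ∈ C([0,∞)) ∩ C²((0,∞))` is nonnegative, solves the radial equation
`u'' + ((N-1)/r)u' - r^{ασ}u + u^{2σ+1} = 0` on `(0,∞)` and satisfies
`limsup_{r→∞} r^{(N-1)/2+ασ/4} u(r) < ∞`, then `u(r) ≤ C exp(-c r^{(ασ+2)/2})`. -/
theorem power_equation_decay (N : ℕ) (hN : 2 ≤ N) (α σ : ℝ)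
    (hα : 1 - (N : ℝ) < α) (hσ : 0 < σ) (hσ' : σ * ((N : ℝ) - 2) < 2)
    (hcond : -(σ * α) < 2 * min 1 ((N : ℝ) - 1 + α))
    (u : ℝ → ℝ)
    (huc : ContinuousOn u (Set.Ici 0)) (huC2 : ContDiffOn ℝ 2 u (Set.Ioi 0))
    (hnonneg : ∀ r : ℝ, 0 ≤ r → 0 ≤ u r)
    (hode : ∀ r : ℝ, 0 < r →
      deriv (deriv u) r + ((N : ℝ) - 1) / r * deriv u r
        - r ^ (α * σ) * u r + u r ^ (2 * σ + 1) = 0)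
    (hbd : ∃ M : ℝ, ∀ᶠ r : ℝ in Filter.atTop,
      r ^ (((N : ℝ) - 1) / 2 + α * σ / 4) * u r ≤ M) :
    ∃ C : ℝ, 0 < C ∧ ∃ c : ℝ, 0 < c ∧
      ∀ r : ℝ, 0 ≤ r → u r ≤ C * Real.exp (-c * r ^ ((α * σ + 2) / 2)) :=
  power_equation_decay_general N hN α σ hσ hcond u huc huC2 hnonneg hode hbd
end
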